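/- arXiv:1103.4702 — 10 statements merged into one kernel-verified Lean document; each statement's English description precedes it below -/
import Mathlib

section
/- Let J ⊂ k[x_1,…,x_n] be a pure difference binomial ideal over a field k. Then there exist a positive integer d and vectors a_1,…,a_n ∈ ℤ^d such that the toric ideal I_A of the configuration A = {a_1,…,a_n} is a minimal prime ideal of J. -/
open MvPolynomial

variable (K : Type*) [Field K]

/-- The `A`-degree of an exponent vector `u ∈ ℕ^n` with respect to a configuration
`a : Fin n → (Fin d → ℤ)`, namely `∑ i, u i • a i ∈ ℤ^d`. -/
noncomputable def degA {n d : ℕ} (a : Fin n → Fin d → ℤ) (u : Fin n →₀ ℕ) : Fin d → ℤ :=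
  ∑ i, (u i : ℤ) • a i

/-- The toric ideal of the configuration `A = {a_1, …, a_n} ⊂ ℤ^d`: the ideal generated by all
binomials `x^u - x^v` with `∑ u_i a_i = ∑ v_i a_i`. -/
noncomputable def toricIdeal {n d : ℕ} (a : Fin n → Fin d → ℤ) :
    Ideal (MvPolynomial (Fin n) K) :=
  Ideal.span { f | ∃ u v : Fin n →₀ ℕ, degA a u = degA a v ∧
    f = monomial u (1 : K) - monomial v (1 : K) }

/-- A pure difference binomial ideal: an ideal generated by differences of monic monomials. -/
def IsPureDiffIdeal {n : ℕ} (J : Ideal (MvPolynomial (Fin n) K)) : Prop :=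
  ∃ S : Set (MvPolynomial (Fin n) K),
    (∀ f ∈ S, ∃ u v : Fin n →₀ ℕ, f = monomial u (1 : K) - monomial v (1 : K)) ∧
    J = Ideal.span S

/-!
Let `Λ ⊆ ℤⁿ` be the lattice of exponent differences `u - v` of the binomials `x^u - x^v ∈ J`,
and choose `A` so that `∑ uᵢ aᵢ = ∑ vᵢ aᵢ` exactly when `u - v` lies in the saturation of `Λ`
(the kernel of `ℤⁿ → (ℤⁿ/Λ)/torsion`, a free group). Then `J ⊆ I_A`, and `I_A` is prime as the
kernel of the monomial map into the Laurent polynomial ring `k[ℤ^d]`.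

For minimality let `J ⊆ q ⊆ I_A` with `q` prime. Since `q` contains no monomial, the binomials in
`q` again form a lattice containing `Λ`, so for `x^u - x^v ∈ I_A` some `(x^u)^m - (x^v)^m` lies
in `q`. If `x^u - x^v ∉ q`, the images `s ≠ t` of `x^u, x^v` in `Frac(k[x]/q)` have `s/t` a root
of unity of order `k` invertible in the field, so `∑_{i<k} sⁱ t^{k-1-i} = 0`. The corresponding
polynomial then lies in `q ⊆ I_A`, but the monomial map sends it to `k · t^{(k-1)·deg u} ≠ 0`.
-/

open Finset

namespace AddMonoidAlgebra

variable {α β R : Type*} [Ring R]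

theorem sub_mapDomain_mapDomain_mem_span (φ : α → β) {r : β → α} (hr : ∀ u, φ (r (φ u)) = φ u)
    (x : R[α]) :
    x - mapDomain r (mapDomain φ x) ∈
      Submodule.span R {y | ∃ u v, φ u = φ v ∧ y = single u 1 - single v 1} := by
  induction x using AddMonoidAlgebra.induction_linear with
  | zero => simp [mapDomain_zero]
  | add x y hx hy =>
    rw [mapDomain_add, mapDomain_add, add_sub_add_comm]
    exact Submodule.add_mem _ hx hy
  | single u c =>
    have hc : single u c - single (r (φ u)) c = c • (single u (1 : R) - single (r (φ u)) 1) := by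
      rw [smul_sub, smul_single', smul_single', mul_one]
    rw [mapDomain_single, mapDomain_single, hc]
    exact Submodule.smul_mem _ _ (Submodule.subset_span ⟨u, _, (hr u).symm, rfl⟩)

theorem mem_span_binomial_of_mapDomain_eq_zero [Nonempty α] (φ : α → β) {x : R[α]}
    (hx : mapDomain φ x = 0) :
    x ∈ Submodule.span R {y | ∃ u v, φ u = φ v ∧ y = single u 1 - single v 1} := by
  simpa [hx, mapDomain_zero] using
    sub_mapDomain_mapDomain_mem_span φ (fun u => Function.invFun_eq ⟨u, rfl⟩) x

end AddMonoidAlgebra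

theorem exists_natCast_ne_zero_geom_sum₂_eq_zero {F : Type*} [Field F] {s t : F} {m : ℕ}
    (hm : m ≠ 0) (hst : s ≠ t) (h : s ^ m = t ^ m) :
    ∃ k : ℕ, (k : F) ≠ 0 ∧ ∑ i ∈ range k, s ^ i * t ^ (k - 1 - i) = 0 := by
  have ht : t ≠ 0 := by
    rintro rfl
    exact hst (pow_eq_zero_iff hm |>.mp (h.trans (zero_pow hm)))
  have hζ : (s / t) ^ m = 1 := by rw [div_pow, h, div_self (pow_ne_zero _ ht)]
  have hpos : 0 < orderOf (s / t) :=
    orderOf_pos_iff.mpr (isOfFinOrder_iff_pow_eq_one.mpr ⟨m, Nat.pos_of_ne_zero hm, hζ⟩)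
  have : NeZero (orderOf (s / t)) := ⟨hpos.ne'⟩
  refine ⟨orderOf (s / t), (IsPrimitiveRoot.orderOf (s / t)).neZero'.out, ?_⟩
  have hk : s ^ orderOf (s / t) = t ^ orderOf (s / t) := by
    have := pow_orderOf_eq_one (s / t)
    rwa [div_pow, div_eq_one_iff_eq (pow_ne_zero _ ht)] at this
  have hgeom := geom_sum₂_mul s t (orderOf (s / t))
  rw [hk, sub_self] at hgeom
  exact (mul_eq_zero.mp hgeom).resolve_right (sub_ne_zero.mpr hst)

theorem exists_natCast_ne_zero_geom_sum₂_eq_zero_of_isDomain {D : Type*} [CommRing D] [IsDomain D]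
    {s t : D} {m : ℕ} (hm : m ≠ 0) (hst : s ≠ t) (h : s ^ m = t ^ m) :
    ∃ k : ℕ, (k : D) ≠ 0 ∧ ∑ i ∈ range k, s ^ i * t ^ (k - 1 - i) = 0 := by
  have hinj := IsFractionRing.injective D (FractionRing D)
  obtain ⟨k, hk, hsum⟩ := exists_natCast_ne_zero_geom_sum₂_eq_zero hm (hinj.ne hst)
    (by rw [← map_pow, ← map_pow, h])
  refine ⟨k, fun h0 => hk (by rw [← map_natCast (algebraMap D _), h0, map_zero]), hinj ?_⟩
  simpa only [map_sum, map_mul, map_pow, map_zero] using hsum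

section Toric

variable {K} {n d : ℕ} (a : Fin n → Fin d → ℤ)

noncomputable def degAHom : (Fin n →₀ ℕ) →+ (Fin d → ℤ) where
  toFun := degA a
  map_zero' := by simp [degA]
  map_add' u v := by simp [degA, add_smul, Finset.sum_add_distrib]

/-- The monomial map `xᵢ ↦ t^{aᵢ}` into the Laurent polynomial ring `k[ℤ^d]`. -/
noncomputable def toricAlgHom : MvPolynomial (Fin n) K →ₐ[K] AddMonoidAlgebra K (Fin d → ℤ) :=
  AddMonoidAlgebra.mapDomainAlgHom K K (degAHom a)

theorem toricAlgHom_monomial (u : Fin n →₀ ℕ) (c : K) :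
    toricAlgHom a (monomial u c) = AddMonoidAlgebra.single (degA a u) c :=
  AddMonoidAlgebra.mapDomain_single

theorem toricIdeal_eq_ker : toricIdeal K a = RingHom.ker (toricAlgHom (K := K) a) := by
  refine le_antisymm ?_ fun f hf => ?_
  · rw [toricIdeal, Ideal.span_le]
    rintro _ ⟨u, v, h, rfl⟩
    simp [toricAlgHom_monomial, h]
  · exact Submodule.span_le_restrictScalars K _ _
      (AddMonoidAlgebra.mem_span_binomial_of_mapDomain_eq_zero (degA a) hf)

theorem toricIdeal_isPrime : (toricIdeal K a).IsPrime := by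
  rw [toricIdeal_eq_ker]
  exact RingHom.ker_isPrime _

theorem monomial_one_notMem_toricIdeal (u : Fin n →₀ ℕ) :
    monomial u (1 : K) ∉ toricIdeal K a := by
  simp [toricIdeal_eq_ker, toricAlgHom_monomial]

theorem le_toricIdeal {J : Ideal (MvPolynomial (Fin n) K)} (hJ : IsPureDiffIdeal K J)
    (h : ∀ u v, monomial u (1 : K) - monomial v 1 ∈ J → degA a u = degA a v) :
    J ≤ toricIdeal K a := by
  obtain ⟨S, hS, rfl⟩ := hJ
  rw [Ideal.span_le]
  intro f hf
  obtain ⟨u, v, rfl⟩ := hS f hf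
  exact Ideal.subset_span ⟨u, v, h u v (Ideal.subset_span hf), rfl⟩

/-- The monomial map sends `∑_{i<k} (x^u)ⁱ (x^v)^{k-1-i}` to `k · t^{(k-1) deg u}`, which is
nonzero when `k` is. -/
theorem sub_mem_of_pow_sub_pow_mem {q : Ideal (MvPolynomial (Fin n) K)} [q.IsPrime]
    (hqA : q ≤ toricIdeal K a) {u v : Fin n →₀ ℕ} (huv : degA a u = degA a v) {m : ℕ}
    (hm : m ≠ 0) (h : monomial u (1 : K) ^ m - monomial v 1 ^ m ∈ q) :
    monomial u (1 : K) - monomial v 1 ∈ q := by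
  by_contra hnot
  set x : MvPolynomial (Fin n) K := monomial u 1
  set y : MvPolynomial (Fin n) K := monomial v 1
  obtain ⟨k, hk, hsum⟩ := exists_natCast_ne_zero_geom_sum₂_eq_zero_of_isDomain (D := _ ⧸ q)
    (s := Ideal.Quotient.mk q x) (t := Ideal.Quotient.mk q y) hm
    (by rwa [Ne, Ideal.Quotient.eq]) (by simpa only [map_pow] using Ideal.Quotient.eq.mpr h)
  have hg : ∑ i ∈ range k, x ^ i * y ^ (k - 1 - i) ∈ toricIdeal K a :=
    hqA (Ideal.Quotient.eq_zero_iff_mem.mp (by simpa only [map_sum, map_mul, map_pow] using hsum))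
  have hxy : toricAlgHom a x = toricAlgHom a y := by
    rw [toricAlgHom_monomial, toricAlgHom_monomial, huv]
  rw [toricIdeal_eq_ker, RingHom.mem_ker, map_sum] at hg
  simp only [map_mul, map_pow, hxy] at hg
  rw [geom_sum₂_self, toricAlgHom_monomial] at hg
  have hkK : (k : K) = 0 := by
    refine (algebraMap K (AddMonoidAlgebra K (Fin d → ℤ))).injective ?_
    simpa using hg
  exact hk (by rw [← map_natCast (algebraMap K (_ ⧸ q)), hkK, map_zero])

end Toric

namespace Submodule

variable {V : Type*} [AddCommGroup V]

def saturation (L : Submodule ℤ V) : Submodule ℤ V :=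
  (torsion ℤ (V ⧸ L)).comap L.mkQ

theorem mem_saturation_iff {L : Submodule ℤ V} {w : V} :
    w ∈ L.saturation ↔ ∃ m : ℕ, m ≠ 0 ∧ m • w ∈ L := by
  simp only [saturation, mem_comap, mem_torsion_iff, mkQ_apply, Submonoid.smul_def,
    ← Quotient.mk_smul, Quotient.mk_eq_zero]
  constructor
  · rintro ⟨m, hmw⟩
    refine ⟨(m : ℤ).natAbs, Int.natAbs_ne_zero.mpr (nonZeroDivisors.ne_zero m.2), ?_⟩
    rcases Int.natAbs_eq (m : ℤ) with h | h
    · rwa [h, natCast_zsmul] at hmw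
    · rw [← natCast_zsmul, ← neg_neg ((m : ℤ).natAbs : ℤ), ← h, neg_smul]
      exact L.neg_mem hmw
  · rintro ⟨m, hm, hmw⟩
    exact ⟨⟨m, mem_nonZeroDivisors_of_ne_zero (Int.natCast_ne_zero.mpr hm)⟩,
      by rwa [natCast_zsmul]⟩

theorem le_saturation (L : Submodule ℤ V) : L ≤ L.saturation :=
  fun w hw => mem_saturation_iff.mpr ⟨1, one_ne_zero, by rwa [one_smul]⟩

theorem saturation_mono {L L' : Submodule ℤ V} (h : L ≤ L') : L.saturation ≤ L'.saturation :=
  fun _ hw => by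
    obtain ⟨m, hm, hmw⟩ := mem_saturation_iff.mp hw
    exact mem_saturation_iff.mpr ⟨m, hm, h hmw⟩

/-- `(V/L)/torsion` is free, so adding a factor `ℤ` (to make the rank positive) gives a
coordinate map `V → ℤ^d` whose kernel is the saturation of `L`. -/
theorem exists_linearMap_ker_eq_saturation [Module.Finite ℤ V] (L : Submodule ℤ V) :
    ∃ d : ℕ, 0 < d ∧ ∃ f : V →ₗ[ℤ] (Fin d → ℤ), LinearMap.ker f = L.saturation := by
  let M := (V ⧸ L) ⧸ torsion ℤ (V ⧸ L)
  let b := Module.finBasis ℤ (M × ℤ)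
  refine ⟨_, Module.finrank_pos,
    b.equivFun.toLinearMap ∘ₗ LinearMap.inl ℤ M ℤ ∘ₗ (torsion ℤ (V ⧸ L)).mkQ ∘ₗ L.mkQ, ?_⟩
  rw [LinearEquiv.ker_comp, LinearMap.ker_comp, ker_inl, comap_bot, LinearMap.ker_comp,
    ker_mkQ, saturation]

end Submodule

section BinomialLattice

variable {K} {n : ℕ}

def intVec (u : Fin n →₀ ℕ) : Fin n → ℤ := fun i => u i

def binomialLattice (q : Ideal (MvPolynomial (Fin n) K)) : Submodule ℤ (Fin n → ℤ) :=
  AddSubgroup.toIntSubmodule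
    { carrier := {w | ∃ u v, monomial u (1 : K) - monomial v 1 ∈ q ∧ intVec u - intVec v = w}
      zero_mem' := ⟨0, 0, by simp, sub_self _⟩
      add_mem' := by
        rintro _ _ ⟨u, v, huv, rfl⟩ ⟨u', v', huv', rfl⟩
        refine ⟨u + u', v + v', ?_, by funext i; simp [intVec]; ring⟩
        have h : monomial (u + u') (1 : K) - monomial (v + v') 1 =
            monomial u' 1 * (monomial u 1 - monomial v 1) +
              monomial v 1 * (monomial u' 1 - monomial v' 1) := by
          simp only [mul_sub, monomial_mul, mul_one, add_comm u']
          ring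
        rw [h]
        exact q.add_mem (q.mul_mem_left _ huv) (q.mul_mem_left _ huv')
      neg_mem' := by
        rintro _ ⟨u, v, huv, rfl⟩
        exact ⟨v, u, by simpa using q.neg_mem huv, by simp⟩ }

theorem sub_mem_binomialLattice {q : Ideal (MvPolynomial (Fin n) K)} {u v : Fin n →₀ ℕ}
    (h : monomial u (1 : K) - monomial v 1 ∈ q) : intVec u - intVec v ∈ binomialLattice q :=
  ⟨u, v, h, rfl⟩

theorem binomialLattice_mono {J q : Ideal (MvPolynomial (Fin n) K)} (h : J ≤ q) :
    binomialLattice J ≤ binomialLattice q := by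
  rintro _ ⟨u, v, huv, rfl⟩
  exact ⟨u, v, h huv, rfl⟩

/-- If `u - v = u' - v'` then `x^{v'} (x^u - x^v) = x^v (x^{u'} - x^{v'})`, and `x^{v'} ∉ q`. -/
theorem sub_mem_of_mem_binomialLattice {q : Ideal (MvPolynomial (Fin n) K)} [q.IsPrime]
    (hq : ∀ u, monomial u (1 : K) ∉ q) {u v : Fin n →₀ ℕ}
    (h : intVec u - intVec v ∈ binomialLattice q) : monomial u (1 : K) - monomial v 1 ∈ q := by
  obtain ⟨u', v', h', he⟩ := h
  have hsum : v' + u = v + u' := by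
    ext i
    have := congrFun he i
    simp only [intVec, Pi.sub_apply] at this
    simp only [Finsupp.add_apply]
    omega
  have hmul : monomial v' (1 : K) * (monomial u 1 - monomial v 1) =
      monomial v 1 * (monomial u' 1 - monomial v' 1) := by
    simp only [mul_sub, monomial_mul, mul_one, hsum, add_comm v' v]
  exact (‹q.IsPrime›.mem_or_mem (hmul ▸ q.mul_mem_left _ h')).resolve_left (hq v')

end BinomialLattice

section Configuration

variable {K} {n d : ℕ}

theorem degA_basisFun (f : (Fin n → ℤ) →ₗ[ℤ] (Fin d → ℤ)) (u : Fin n →₀ ℕ) :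
    degA (fun i => f (Pi.basisFun ℤ (Fin n) i)) u = f (intVec u) := by
  conv_rhs => rw [← (Pi.basisFun ℤ (Fin n)).sum_repr (intVec u)]
  simp only [degA, intVec, map_sum, map_smul, Pi.basisFun_repr]

theorem toricIdeal_le_of_le_saturation (a : Fin n → Fin d → ℤ)
    {q : Ideal (MvPolynomial (Fin n) K)} [q.IsPrime] (hqA : q ≤ toricIdeal K a)
    (h : ∀ u v, degA a u = degA a v → intVec u - intVec v ∈ (binomialLattice q).saturation) :
    toricIdeal K a ≤ q := by
  rw [toricIdeal, Ideal.span_le]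
  rintro _ ⟨u, v, huv, rfl⟩
  obtain ⟨m, hm, hmem⟩ := Submodule.mem_saturation_iff.mp (h u v huv)
  have hpow : intVec (m • u) - intVec (m • v) = m • (intVec u - intVec v) := by
    funext i
    simp [intVec, mul_sub]
  rw [← hpow] at hmem
  refine sub_mem_of_pow_sub_pow_mem a hqA huv hm ?_
  simpa only [monomial_pow, one_pow] using sub_mem_of_mem_binomialLattice
    (fun w hw => monomial_one_notMem_toricIdeal a w (hqA hw)) hmem

end Configuration

/-- For every pure difference binomial ideal `J ⊂ k[x_1,…,x_n]` there exist a
positive integer `d` and vectors `a_1, …, a_n ∈ ℤ^d` such that the toric ideal `I_A` of the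
configuration `A = {a_1,…,a_n}` is a minimal prime of `J`. -/
theorem statement0 {n : ℕ} (J : Ideal (MvPolynomial (Fin n) K))
    (hJ : IsPureDiffIdeal K J) :
    ∃ d : ℕ, 0 < d ∧ ∃ a : Fin n → Fin d → ℤ, toricIdeal K a ∈ J.minimalPrimes := by
  obtain ⟨d, hd, f, hf⟩ := (binomialLattice J).exists_linearMap_ker_eq_saturation
  let a : Fin n → Fin d → ℤ := fun i => f (Pi.basisFun ℤ (Fin n) i)
  have hdeg : ∀ u v, degA a u = degA a v ↔
      intVec u - intVec v ∈ (binomialLattice J).saturation := by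
    intro u v
    rw [← hf, LinearMap.mem_ker, map_sub, sub_eq_zero, degA_basisFun, degA_basisFun]
  refine ⟨d, hd, a, ⟨toricIdeal_isPrime a, le_toricIdeal a hJ fun u v huv => ?_⟩, ?_⟩
  · exact (hdeg u v).mpr ((binomialLattice J).le_saturation (sub_mem_binomialLattice huv))
  · rintro q ⟨hq, hJq⟩ hqA
    exact toricIdeal_le_of_le_saturation a hqA fun u v huv =>
      Submodule.saturation_mono (binomialLattice_mono hJq) ((hdeg u v).mp huv)
end

section
/- A monomial x^u (u ≠ 0) is an indispensable monomial of J if and only if x^u is a minimal generator of the monomial ideal M_J, i.e., x^u ∈ M_J and there is no monomial x^w ∈ M_J properly dividing x^u. -/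
open MvPolynomial

variable (K : Type*) [Field K]

/-- The monoid `ℕA` has no nonzero units: if `b ∈ ℕA` and `-b ∈ ℕA` then `b = 0`. -/
def NoUnits {n d : ℕ} (a : Fin n → Fin d → ℤ) : Prop :=
  ∀ u v : Fin n →₀ ℕ, degA a u + degA a v = 0 → degA a u = 0

/-- `J` is an `A`-homogeneous pure difference binomial ideal: it is generated by binomials
`x^u - x^v` with `deg_A(x^u) = deg_A(x^v)`. -/
def IsAHomogPureDiff {n d : ℕ} (a : Fin n → Fin d → ℤ)
    (J : Ideal (MvPolynomial (Fin n) K)) : Prop :=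
  ∃ S : Set (MvPolynomial (Fin n) K),
    (∀ f ∈ S, ∃ u v : Fin n →₀ ℕ, degA a u = degA a v ∧
      f = monomial u (1 : K) - monomial v (1 : K)) ∧
    J = Ideal.span S

/-- `S` is a set of binomials generating `J`. -/
def IsBinomGenSet {σ : Type*} (J : Ideal (MvPolynomial σ K)) (S : Set (MvPolynomial σ K)) :
    Prop :=
  (∀ f ∈ S, ∃ u v : σ →₀ ℕ, f = monomial u (1 : K) - monomial v (1 : K)) ∧
  Ideal.span S = J

/-- The monomial `x^u` is an indispensable monomial of `J`: every set of binomials generating `J`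
contains a binomial one of whose monomials is `x^u`. -/
def IndispMonomial {σ : Type*} (J : Ideal (MvPolynomial σ K)) (u : σ →₀ ℕ) : Prop :=
  ∀ S : Set (MvPolynomial σ K), IsBinomGenSet K J S → ∃ f ∈ S, u ∈ f.support

/-- `f` is an indispensable binomial of `J`: every set of binomials generating `J` contains
`f` or `-f`. -/
def IndispBinomial {σ : Type*} (J : Ideal (MvPolynomial σ K)) (f : MvPolynomial σ K) : Prop :=
  ∀ S : Set (MvPolynomial σ K), IsBinomGenSet K J S → f ∈ S ∨ -f ∈ S

/-- `M_J`: the monomial ideal generated by all monomials `x^u` for which there exists a nonzero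
binomial `x^u - x^v ∈ J`. -/
noncomputable def MIdeal {n : ℕ} (J : Ideal (MvPolynomial (Fin n) K)) :
    Ideal (MvPolynomial (Fin n) K) :=
  Ideal.span { m | ∃ u v : Fin n →₀ ℕ, u ≠ v ∧
    (monomial u (1 : K) - monomial v (1 : K)) ∈ J ∧ m = monomial u (1 : K) }

/-- The edge relation of the graph `G_b(J)`: two (distinct) monomials `x^u`, `x^v` are joined by
an edge iff `gcd(x^u, x^v) ≠ 1` and there is a monomial `x^w ≠ 1` dividing `gcd(x^u, x^v)` with
`x^{u-w} - x^{v-w} ∈ J`. -/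
def GEdge {n : ℕ} (J : Ideal (MvPolynomial (Fin n) K)) (u v : Fin n →₀ ℕ) : Prop :=
  u ≠ v ∧ ¬ Disjoint u.support v.support ∧
  ∃ w : Fin n →₀ ℕ, w ≠ 0 ∧ w ≤ u ∧ w ≤ v ∧
    (monomial (u - w) (1 : K) - monomial (v - w) (1 : K)) ∈ J


lemma support_binomial_subset {σ : Type*} [DecidableEq σ] (a b : σ →₀ ℕ) :
    (monomial a (1 : K) - monomial b (1 : K)).support ⊆ {a, b} := by
  intro m hm
  rw [MvPolynomial.mem_support_iff] at hm
  simp only [coeff_sub, coeff_monomial] at hm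
  by_contra h
  simp only [Finset.mem_insert, Finset.mem_singleton, not_or] at h
  rw [if_neg (fun hh => h.1 hh.symm), if_neg (fun hh => h.2 hh.symm), sub_zero] at hm
  exact hm rfl

lemma mem_support_binomial_left {σ : Type*} [DecidableEq σ] {a b : σ →₀ ℕ} (h : a ≠ b) :
    a ∈ (monomial a (1 : K) - monomial b (1 : K)).support := by
  rw [MvPolynomial.mem_support_iff]
  simp [coeff_sub, coeff_monomial, h.symm]

lemma mem_support_binomial_right {σ : Type*} [DecidableEq σ] {a b : σ →₀ ℕ} (h : a ≠ b) :
    b ∈ (monomial a (1 : K) - monomial b (1 : K)).support := by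
  rw [MvPolynomial.mem_support_iff]
  simp [coeff_sub, coeff_monomial, h]

lemma span_support_le {σ : Type*} [DecidableEq σ] {S : Set (MvPolynomial σ K)}
    {T : Set (σ →₀ ℕ)}
    (hS : ∀ f ∈ S, ∀ m ∈ f.support, ∃ p ∈ T, p ≤ m)
    {f : MvPolynomial σ K} (hf : f ∈ Ideal.span S) :
    ∀ m ∈ f.support, ∃ p ∈ T, p ≤ m := by
  induction hf using Submodule.span_induction with
  | mem x h => exact hS x h
  | zero => simp
  | add x y hx hy ihx ihy =>
      intro m hm
      rcases Finset.mem_union.mp (MvPolynomial.support_add hm) with h | h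
      exacts [ihx m h, ihy m h]
  | smul r x hx ih =>
      intro m hm
      rw [smul_eq_mul] at hm
      obtain ⟨c, _, m', hm', rfl⟩ := Finset.mem_add.mp (MvPolynomial.support_mul _ _ hm)
      obtain ⟨p, hp, hle⟩ := ih m' hm'
      exact ⟨p, hp, hle.trans le_add_self⟩

lemma mem_MIdeal_exists {n : ℕ} {J : Ideal (MvPolynomial (Fin n) K)} {w : Fin n →₀ ℕ}
    (h : (monomial w (1 : K) : MvPolynomial (Fin n) K) ∈ MIdeal K J) :
    ∃ p q : Fin n →₀ ℕ, p ≠ q ∧ (monomial p (1 : K) - monomial q (1 : K)) ∈ J ∧ p ≤ w := by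
  classical
  have key := span_support_le K
    (T := {p | ∃ q, p ≠ q ∧ (monomial p (1 : K) - monomial q (1 : K)) ∈ J})
    (S := { m | ∃ u v : Fin n →₀ ℕ, u ≠ v ∧
      (monomial u (1 : K) - monomial v (1 : K)) ∈ J ∧ m = monomial u (1 : K) })
    ?_ h w ?_
  · obtain ⟨p, ⟨q, hpq, hJ⟩, hpw⟩ := key
    exact ⟨p, q, hpq, hJ, hpw⟩
  · rintro f ⟨a, b, hab, hJ, rfl⟩ m hm
    rw [MvPolynomial.support_monomial, if_neg one_ne_zero, Finset.mem_singleton] at hm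
    exact ⟨a, ⟨b, hab, hJ⟩, hm ▸ le_refl a⟩
  · rw [MvPolynomial.mem_support_iff, coeff_monomial, if_pos rfl]
    exact one_ne_zero

lemma mem_span_binom_exists {n : ℕ} {S : Set (MvPolynomial (Fin n) K)}
    (hbin : ∀ f ∈ S, ∃ a b : Fin n →₀ ℕ, f = monomial a (1 : K) - monomial b (1 : K))
    {f : MvPolynomial (Fin n) K} (hf : f ∈ Ideal.span S) {m : Fin n →₀ ℕ}
    (hm : m ∈ f.support) :
    ∃ a b : Fin n →₀ ℕ, (monomial a (1 : K) - monomial b (1 : K)) ∈ S ∧ a ≠ b ∧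
      (a ≤ m ∨ b ≤ m) := by
  have key := span_support_le K
    (T := {c | ∃ a b : Fin n →₀ ℕ, (monomial a (1 : K) - monomial b (1 : K)) ∈ S ∧ a ≠ b ∧
      (c = a ∨ c = b)}) ?_ hf m hm
  · obtain ⟨p, ⟨a, b, hS, hab, hor⟩, hpm⟩ := key
    rcases hor with h | h
    exacts [⟨a, b, hS, hab, Or.inl (h ▸ hpm)⟩, ⟨a, b, hS, hab, Or.inr (h ▸ hpm)⟩]
  · rintro g hg c hc
    obtain ⟨a, b, rfl⟩ := hbin g hg
    by_cases hab : a = b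
    · rw [hab, sub_self] at hc; simp at hc
    · have := support_binomial_subset K a b hc
      rw [Finset.mem_insert, Finset.mem_singleton] at this
      exact ⟨c, ⟨a, b, hg, hab, this⟩, le_refl c⟩

/-- A monomial `x^u` (`u ≠ 0`) is an indispensable monomial of `J` if and only if
`x^u` is a minimal generator of the monomial ideal `M_J`: `x^u ∈ M_J` and no monomial
`x^w ∈ M_J` properly divides `x^u`. -/
theorem statement2 {n d : ℕ} (a : Fin n → Fin d → ℤ) (hA : NoUnits a)
    (J : Ideal (MvPolynomial (Fin n) K)) (hJ : IsAHomogPureDiff K a J)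
    (u : Fin n →₀ ℕ) (hu : u ≠ 0) :
    IndispMonomial K J u ↔
      ((monomial u (1 : K) : MvPolynomial (Fin n) K) ∈ MIdeal K J ∧
        ¬ ∃ w : Fin n →₀ ℕ,
          (monomial w (1 : K) : MvPolynomial (Fin n) K) ∈ MIdeal K J ∧ w ≤ u ∧ w ≠ u) := by
  classical
  obtain ⟨S₀, hS₀homog, hJS₀⟩ := hJ
  have hS₀bin : ∀ f ∈ S₀, ∃ a b : Fin n →₀ ℕ, f = monomial a (1 : K) - monomial b (1 : K) := by
    intro f hf
    obtain ⟨a, b, _, hfe⟩ := hS₀homog f hf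
    exact ⟨a, b, hfe⟩
  have hS₀gen : IsBinomGenSet K J S₀ := ⟨hS₀bin, hJS₀.symm⟩
  constructor
  · intro hind
    have humem : (monomial u (1 : K) : MvPolynomial (Fin n) K) ∈ MIdeal K J := by
      obtain ⟨f, hfS, hfu⟩ := hind S₀ hS₀gen
      obtain ⟨a, b, rfl⟩ := hS₀bin f hfS
      have hab : a ≠ b := by
        rintro rfl
        rw [sub_self] at hfu
        simp at hfu
      have hfJ : (monomial a (1 : K) - monomial b (1 : K)) ∈ J := by
        rw [hJS₀]; exact Ideal.subset_span hfS
      have hua := support_binomial_subset K a b hfu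
      rw [Finset.mem_insert, Finset.mem_singleton] at hua
      rcases hua with rfl | rfl
      · exact Ideal.subset_span ⟨u, b, hab, hfJ, rfl⟩
      · refine Ideal.subset_span ⟨u, a, hab.symm, ?_, rfl⟩
        have hneg := J.neg_mem hfJ
        rwa [neg_sub] at hneg
    refine ⟨humem, ?_⟩
    rintro ⟨w, hwM, hwu, hwne⟩
    obtain ⟨p, q, hpq, hpqJ, hpw⟩ := mem_MIdeal_exists K hwM
    have hpu : p ≤ u := hpw.trans hwu
    have hpne : p ≠ u := fun h => hwne (le_antisymm hwu (h ▸ hpw))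
    set t : Fin n →₀ ℕ := u - p with ht
    have htp : t + p = u := tsub_add_cancel_of_le hpu
    have htne : t ≠ 0 := by
      intro h
      apply hpne
      rw [← htp, h, zero_add]
    obtain ⟨Q, hQu, hQp, hQJ⟩ : ∃ Q : Fin n →₀ ℕ, Q ≠ u ∧ Q ≠ p ∧
        (monomial p (1 : K) - monomial Q (1 : K)) ∈ J := by
      by_cases hq : q = u
      · subst hq
        refine ⟨q + t, ?_, ?_, ?_⟩
        · intro h
          exact htne (by simpa using h)
        · intro h
          exact hpne (le_antisymm hpu (h ▸ self_le_add_right q t))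
        · have h2 : (monomial q (1 : K) - monomial (q + t) (1 : K))
              = monomial t (1 : K) * (monomial p (1 : K) - monomial q (1 : K)) := by
            rw [mul_sub, monomial_mul, monomial_mul, one_mul, htp, add_comm q t]
          have h3 : (monomial p (1 : K) - monomial (q + t) (1 : K))
              = (monomial p (1 : K) - monomial q (1 : K))
                + (monomial q (1 : K) - monomial (q + t) (1 : K)) := by ring
          rw [h3, h2]
          exact J.add_mem hpqJ (Ideal.mul_mem_left _ _ hpqJ)
      · exact ⟨q, hq, fun h => hpq h.symm, hpqJ⟩
    set u' : Fin n →₀ ℕ := t + Q with hu'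
    have hu'ne : u' ≠ u := by
      intro h
      apply hQp
      have h2 : t + Q = t + p := by rw [← hu', h, ← htp]
      exact add_left_cancel h2
    set g : MvPolynomial (Fin n) K := monomial p (1 : K) - monomial Q (1 : K) with hg
    have hgJ : g ∈ J := hQJ
    set ρ : (Fin n →₀ ℕ) → (Fin n →₀ ℕ) := fun v => if v = u then u' else v with hρ
    have hρne : ∀ v, ρ v ≠ u := by
      intro v
      by_cases h : v = u
      · simpa [hρ, h] using hu'ne
      · simp only [hρ]; rwa [if_neg h]
    have hkey : (monomial u (1 : K) - monomial u' (1 : K))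
        = monomial t (1 : K) * g := by
      rw [hg, hu', mul_sub, monomial_mul, monomial_mul, one_mul, htp]
    have hcorr : ∀ (I : Ideal (MvPolynomial (Fin n) K)), g ∈ I →
        ∀ v, (monomial (ρ v) (1 : K) - monomial v (1 : K)) ∈ I := by
      intro I hgI v
      by_cases h : v = u
      · subst h
        have hρu : ρ v = u' := by rw [hρ]; simp
        rw [hρu]
        have heq : monomial u' (1 : K) - monomial v (1 : K) = -(monomial t (1 : K) * g) := by
          rw [← hkey]; ring
        rw [heq]
        exact I.neg_mem (Ideal.mul_mem_left _ _ hgI)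
      · have hρv : ρ v = v := by rw [hρ]; simp [h]
        rw [hρv, sub_self]
        exact I.zero_mem
    set S' : Set (MvPolynomial (Fin n) K) :=
      insert g {h | ∃ a b : Fin n →₀ ℕ, (monomial a (1 : K) - monomial b (1 : K)) ∈ S₀ ∧
        h = monomial (ρ a) (1 : K) - monomial (ρ b) (1 : K)} with hS'
    have hgS' : g ∈ Ideal.span S' := Ideal.subset_span (Set.mem_insert _ _)
    have hspan : Ideal.span S' = J := by
      apply le_antisymm
      · rw [Ideal.span_le]
        intro f hf
        rcases Set.mem_insert_iff.mp hf with rfl | ⟨a, b, habS, rfl⟩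
        · exact hgJ
        · have hmem : (monomial a (1 : K) - monomial b (1 : K)) ∈ J := by
            rw [hJS₀]; exact Ideal.subset_span habS
          have heq : (monomial (ρ a) (1 : K) - monomial (ρ b) (1 : K))
              = (monomial a (1 : K) - monomial b (1 : K))
                + ((monomial (ρ a) (1 : K) - monomial a (1 : K))
                  - (monomial (ρ b) (1 : K) - monomial b (1 : K))) := by ring
          rw [heq]
          exact J.add_mem hmem (J.sub_mem (hcorr J hgJ a) (hcorr J hgJ b))
      · rw [hJS₀, Ideal.span_le]
        intro f hfS₀
        obtain ⟨a, b, rfl⟩ := hS₀bin f hfS₀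
        have hmemS' : (monomial (ρ a) (1 : K) - monomial (ρ b) (1 : K)) ∈ Ideal.span S' :=
          Ideal.subset_span (Set.mem_insert_iff.mpr (Or.inr ⟨a, b, hfS₀, rfl⟩))
        have heq : (monomial a (1 : K) - monomial b (1 : K))
            = (monomial (ρ a) (1 : K) - monomial (ρ b) (1 : K))
              - ((monomial (ρ a) (1 : K) - monomial a (1 : K))
                - (monomial (ρ b) (1 : K) - monomial b (1 : K))) := by ring
        rw [heq]
        exact Submodule.sub_mem _ hmemS'
          (Submodule.sub_mem _ (hcorr _ hgS' a) (hcorr _ hgS' b))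
    have hS'gen : IsBinomGenSet K J S' := by
      refine ⟨?_, hspan⟩
      intro f hf
      rcases Set.mem_insert_iff.mp hf with rfl | ⟨a, b, _, rfl⟩
      · exact ⟨p, Q, hg⟩
      · exact ⟨ρ a, ρ b, rfl⟩
    obtain ⟨f, hfS', hfu⟩ := hind S' hS'gen
    rcases Set.mem_insert_iff.mp hfS' with rfl | ⟨a, b, _, rfl⟩
    · rw [hg] at hfu
      have hsub := support_binomial_subset K p Q hfu
      rw [Finset.mem_insert, Finset.mem_singleton] at hsub
      rcases hsub with h | h
      exacts [hpne h.symm, hQu h.symm]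
    · have hsub := support_binomial_subset K (ρ a) (ρ b) hfu
      rw [Finset.mem_insert, Finset.mem_singleton] at hsub
      rcases hsub with h | h
      exacts [hρne a h.symm, hρne b h.symm]
  · rintro ⟨hmem, hmin⟩ S hSgen
    obtain ⟨hSbin, hSspan⟩ := hSgen
    obtain ⟨p, q, hpq, hpqJ, hpu⟩ := mem_MIdeal_exists K hmem
    have hp : p = u := by
      by_contra h
      exact hmin ⟨p, Ideal.subset_span ⟨p, q, hpq, hpqJ, rfl⟩, hpu, h⟩
    rw [hp] at hpq hpqJ
    have hfspan : (monomial u (1 : K) - monomial q (1 : K)) ∈ Ideal.span S := by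
      rw [hSspan]; exact hpqJ
    have husupp : u ∈ (monomial u (1 : K) - monomial q (1 : K)).support :=
      mem_support_binomial_left K hpq
    obtain ⟨c, e, hceS, hce, hor⟩ := mem_span_binom_exists K hSbin hfspan husupp
    have hceJ : (monomial c (1 : K) - monomial e (1 : K)) ∈ J := by
      rw [← hSspan]; exact Ideal.subset_span hceS
    rcases hor with hcle | hele
    · have hc : c = u := by
        by_contra hne
        exact hmin ⟨c, Ideal.subset_span ⟨c, e, hce, hceJ, rfl⟩, hcle, hne⟩
      subst hc
      exact ⟨_, hceS, mem_support_binomial_left K hce⟩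
    · have he : e = u := by
        by_contra hne
        refine hmin ⟨e, Ideal.subset_span ⟨e, c, hce.symm, ?_, rfl⟩, hele, hne⟩
        have hneg := J.neg_mem hceJ
        rwa [neg_sub] at hneg
      subst he
      exact ⟨_, hceS, mem_support_binomial_right K hce⟩
end

section
/- If x^u ∈ M_J and x^u is an indispensable monomial of the toric ideal I_A, then x^u is an indispensable monomial of J. -/
open MvPolynomial

variable (K : Type*) [Field K]

/-!
Given `x^u - x^w ∈ J` with `w ≠ u` (which is what `x^u ∈ M_J` provides) and a binomial generating
set `S` of `J`, adjoin to `S` every binomial of `I_A` in which `x^u` does not occur. The result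
generates `I_A`, since `J ⊆ I_A` and any binomial of `I_A` involving `x^u` is recovered by passing
through `x^w`. Indispensability of `x^u` in `I_A` forces `x^u` to occur in this set, hence in `S`.
-/

section

variable {K}

lemma le_toricIdeal_of_isAHomogPureDiff {n d : ℕ} {a : Fin n → Fin d → ℤ}
    {J : Ideal (MvPolynomial (Fin n) K)} (hJ : IsAHomogPureDiff K a J) :
    J ≤ toricIdeal K a := by
  obtain ⟨S, hS, rfl⟩ := hJ
  rw [Ideal.span_le]
  intro f hf
  obtain ⟨p, q, hpq, rfl⟩ := hS f hf
  exact Ideal.subset_span ⟨p, q, hpq, rfl⟩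

lemma exists_isBinomGenSet_toricIdeal {n d : ℕ} (a : Fin n → Fin d → ℤ) :
    ∃ B, IsBinomGenSet K (toricIdeal K a) B := by
  refine ⟨_, ?_, rfl⟩
  rintro f ⟨p, q, -, rfl⟩
  exact ⟨p, q, rfl⟩

lemma exists_monomial_sub_mem_of_monomial_mem_MIdeal {n : ℕ}
    {J : Ideal (MvPolynomial (Fin n) K)} {u : Fin n →₀ ℕ}
    (hu : (monomial u (1 : K) : MvPolynomial (Fin n) K) ∈ MIdeal K J) :
    ∃ w, w ≠ u ∧ monomial u (1 : K) - monomial w 1 ∈ J := by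
  have hgens : { m | ∃ p v : Fin n →₀ ℕ, p ≠ v ∧
      (monomial p (1 : K) - monomial v (1 : K)) ∈ J ∧ m = monomial p (1 : K) }
      = (fun s => monomial s (1 : K)) ''
        { p | ∃ v, p ≠ v ∧ monomial p (1 : K) - monomial v 1 ∈ J } := by
    ext f
    constructor
    · rintro ⟨p, v, hpv, hmem, rfl⟩; exact ⟨p, ⟨v, hpv, hmem⟩, rfl⟩
    · rintro ⟨p, ⟨v, hpv, hmem⟩, rfl⟩; exact ⟨p, v, hpv, hmem, rfl⟩
  rw [MIdeal, hgens, mem_ideal_span_monomial_image] at hu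
  obtain ⟨p, ⟨v, hpv, hmem⟩, hpu⟩ := hu u (by simp [mem_support_iff])
  have hsplit : u - p + p = u := tsub_add_cancel_of_le hpu
  refine ⟨u - p + v, fun h => hpv (add_left_cancel (hsplit.trans h.symm)), ?_⟩
  have hfactor : monomial u (1 : K) - monomial (u - p + v) 1
      = monomial (u - p) 1 * (monomial p 1 - monomial v 1) := by
    rw [mul_sub, monomial_mul, monomial_mul, one_mul, hsplit]
  rw [hfactor]
  exact Ideal.mul_mem_left _ _ hmem

lemma IndispMonomial.of_le_of_monomial_sub_mem {σ : Type*} {I J : Ideal (MvPolynomial σ K)} {u w : σ →₀ ℕ}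
    (hind : IndispMonomial K I u) (hI : ∃ B, IsBinomGenSet K I B) (hJI : J ≤ I)
    (hwu : w ≠ u) (hw : monomial u (1 : K) - monomial w 1 ∈ J) :
    IndispMonomial K J u := by
  intro S hS
  set T : Set (MvPolynomial σ K) :=
    { f | f ∈ I ∧ ∃ p q, p ≠ u ∧ q ≠ u ∧ f = monomial p (1 : K) - monomial q 1 }
  have hJ : J ≤ Ideal.span (S ∪ T) := hS.2 ▸ Ideal.span_mono Set.subset_union_left
  have hT {f} (hf : f ∈ T) : f ∈ Ideal.span (S ∪ T) :=
    Ideal.subset_span (Set.mem_union_right S hf)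
  have hbinom (p q : σ →₀ ℕ) (hpq : monomial p (1 : K) - monomial q 1 ∈ I) :
      monomial p (1 : K) - monomial q 1 ∈ Ideal.span (S ∪ T) := by
    have hwI : monomial u (1 : K) - monomial w 1 ∈ I := hJI hw
    by_cases hp : p = u <;> by_cases hq : q = u
    · simp [hp, hq]
    · subst hp
      rw [show monomial p (1 : K) - monomial q 1
          = (monomial p 1 - monomial w 1) + (monomial w 1 - monomial q 1) by ring]
      refine add_mem (hJ hw) (hT ⟨?_, w, q, hwu, hq, rfl⟩)
      simpa using sub_mem hpq hwI
    · subst hq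
      rw [show monomial p (1 : K) - monomial q 1
          = (monomial p 1 - monomial w 1) - (monomial q 1 - monomial w 1) by ring]
      refine sub_mem (hT ⟨?_, p, w, hp, hwu, rfl⟩) (hJ hw)
      simpa using add_mem hpq hwI
    · exact hT ⟨hpq, p, q, hp, hq, rfl⟩
  have hST : IsBinomGenSet K I (S ∪ T) := by
    refine ⟨?_, le_antisymm ?_ ?_⟩
    · rintro f (hf | ⟨-, p, q, -, -, hf⟩)
      exacts [hS.1 f hf, ⟨p, q, hf⟩]
    · rw [Ideal.span_le]
      rintro f (hf | ⟨hf, -⟩)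
      exacts [hJI (hS.2 ▸ Ideal.subset_span hf), hf]
    · obtain ⟨B, hB, rfl⟩ := hI
      rw [Ideal.span_le]
      intro f hf
      obtain ⟨p, q, rfl⟩ := hB f hf
      exact hbinom p q (Ideal.subset_span hf)
  obtain ⟨f, hf | ⟨-, p, q, hp, hq, rfl⟩, hfu⟩ := hind (S ∪ T) hST
  · exact ⟨f, hf, hfu⟩
  · classical
    rw [mem_support_iff, coeff_sub, coeff_monomial, coeff_monomial, if_neg hp, if_neg hq,
      sub_zero] at hfu
    exact (hfu rfl).elim

end

theorem statement3 {n d : ℕ} (a : Fin n → Fin d → ℤ)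
    (J : Ideal (MvPolynomial (Fin n) K)) (hJ : IsAHomogPureDiff K a J)
    (u : Fin n →₀ ℕ)
    (hmem : (monomial u (1 : K) : MvPolynomial (Fin n) K) ∈ MIdeal K J)
    (hind : IndispMonomial K (toricIdeal K a) u) :
    IndispMonomial K J u := by
  obtain ⟨w, hwu, hw⟩ := exists_monomial_sub_mem_of_monomial_mem_MIdeal hmem
  exact hind.of_le_of_monomial_sub_mem (exists_isBinomGenSet_toricIdeal a)
    (le_toricIdeal_of_isAHomogPureDiff hJ) hwu hw
end

section
/- A monomial x^u is an indispensable monomial of J if and only if x^u ∈ M_J and {x^u} is a connected component of the graph G_b(J), where b = deg_A(x^u); that is, x^u is a vertex of G_b(J) joined by an edge to no other vertex. -/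
open MvPolynomial

variable (K : Type*) [Field K]

/-!
Write `s ~ t` when `x^s - x^t ∈ I`; this is an additive congruence on exponents. If `x^u` is joined
to `x^v` by an edge with witness `x^w`, then `x^u - x^v = x^w (x^{u-w} - x^{v-w})` lies in the ideal
generated by the binomials of `J` not involving `x^u`, and hence so does every binomial of `J`:
`x^u` is dispensable. Conversely, let `S` be a binomial generating set none of whose elements
involves `x^u`. A move `x^{p+w} ↦ x^{q+w}` along `x^p - x^q ∈ S` leaving `x^u` would be an edge of
`G_b(J)` if `w ≠ 0`, and would use `x^u` itself if `w = 0`; so all generators respect the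
syntactic congruence of `{u}`, the class of `u` modulo `J` is `{u}`, and `x^u ∉ M_J`.
-/

section Binomial

variable {σ R : Type*} [CommRing R]

def binomialCon (I : Ideal (MvPolynomial σ R)) : AddCon (σ →₀ ℕ) where
  r s t := monomial s (1 : R) - monomial t 1 ∈ I
  iseqv :=
    { refl := fun s => by simp
      symm := fun h => by simpa only [neg_sub] using I.neg_mem h
      trans := fun h h' => by simpa only [sub_add_sub_cancel] using I.add_mem h h' }
  add' {s t s' t'} h h' := by
    rw [← Ideal.Quotient.eq] at h h' ⊢
    rw [← mul_one (1 : R), ← monomial_mul, ← monomial_mul, map_mul, map_mul, h, h']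

theorem binomialCon_iff {I : Ideal (MvPolynomial σ R)} {s t : σ →₀ ℕ} :
    binomialCon I s t ↔ monomial s (1 : R) - monomial t 1 ∈ I :=
  Iff.rfl

/-- Binomial relations hold in every congruence containing those of a generating set, since
`x^s ↦ [s]` extends to a ring map `R[σ →₀ ℕ] → R[(σ →₀ ℕ)/c]` killing the generators. -/
theorem binomialCon_span_le [Nontrivial R] (c : AddCon (σ →₀ ℕ)) {S : Set (MvPolynomial σ R)}
    (hS : ∀ f ∈ S, ∃ p q, c p q ∧ f = monomial p 1 - monomial q 1) :
    binomialCon (Ideal.span S) ≤ c := by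
  intro s t hst
  let Φ := AddMonoidAlgebra.mapDomainRingHom R c.mk'
  have hΦ (m : σ →₀ ℕ) : Φ (monomial m 1) = AddMonoidAlgebra.single (c.mk' m) 1 := by
    simp [Φ, ← single_eq_monomial]
  have hker : Ideal.span S ≤ RingHom.ker Φ := by
    rw [Ideal.span_le]
    intro f hf
    obtain ⟨p, q, hpq, rfl⟩ := hS f hf
    simp [hΦ, (c.eq).mpr hpq]
  have := hker hst
  rw [RingHom.mem_ker, map_sub, hΦ, hΦ, sub_eq_zero,
    AddMonoidAlgebra.single_left_inj one_ne_zero] at this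
  exact c.eq.mp this

theorem mem_support_monomial_sub_monomial [Nontrivial R] {u p q : σ →₀ ℕ} :
    u ∈ (monomial p (1 : R) - monomial q 1).support ↔ p ≠ q ∧ (u = p ∨ u = q) := by
  classical
  rw [mem_support_iff, coeff_sub, coeff_monomial, coeff_monomial]
  by_cases hp : p = u <;> by_cases hq : q = u <;> simp [hp, hq] <;> grind

theorem binomialCon_mono {I I' : Ideal (MvPolynomial σ R)}
    (h : I ≤ I') : binomialCon I ≤ binomialCon I' :=
  fun _ _ hst => h hst

def binomialsAvoiding (J : Ideal (MvPolynomial σ R)) (u : σ →₀ ℕ) :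
    Set (MvPolynomial σ R) :=
  {f | ∃ p q, p ≠ u ∧ q ≠ u ∧ binomialCon J p q ∧ f = monomial p 1 - monomial q 1}

theorem binomialsAvoiding_subset (J : Ideal (MvPolynomial σ R))
    (u : σ →₀ ℕ) : binomialsAvoiding J u ⊆ J := by
  rintro f ⟨p, q, -, -, hpq, rfl⟩
  exact hpq

end Binomial

def AddCon.syntactic {M : Type*} [AddCommMonoid M] (L : Set M) : AddCon M where
  r s t := ∀ w, s + w ∈ L ↔ t + w ∈ L
  iseqv :=
    { refl := fun _ _ => Iff.rfl
      symm := fun h w => (h w).symm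
      trans := fun h h' w => (h w).trans (h' w) }
  add' {s t s' t'} h h' w := by
    rw [add_assoc, h, ← add_assoc, add_comm t, add_assoc, h', ← add_assoc, add_comm t']

section Indispensable

variable {K} {n d : ℕ}

theorem degA_eq_weight (a : Fin n → Fin d → ℤ) : degA a = Finsupp.weight a := by
  ext u : 1
  simp [degA, Finsupp.weight_eq_sum]

theorem monomial_mem_MIdeal_iff {J : Ideal (MvPolynomial (Fin n) K)} {u : Fin n →₀ ℕ} :
    monomial u (1 : K) ∈ MIdeal K J ↔ ∃ v, v ≠ u ∧ binomialCon J u v := by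
  classical
  have hM : MIdeal K J =
      Ideal.span ((fun p => monomial p (1 : K)) '' {p | ∃ q, p ≠ q ∧ binomialCon J p q}) := by
    rw [MIdeal]
    congr 1
    ext f
    simp only [Set.mem_ofPred_eq, Set.mem_image, binomialCon_iff]
    grind
  rw [hM, mem_ideal_span_monomial_image, support_monomial, if_neg one_ne_zero]
  simp only [Finset.mem_singleton, forall_eq, Set.mem_ofPred_eq]
  constructor
  · rintro ⟨p, ⟨q, hpq, hJ⟩, hpu⟩
    obtain ⟨c, rfl⟩ := exists_add_of_le hpu
    exact ⟨q + c, fun h => hpq (add_right_cancel h.symm),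
      (binomialCon J).add hJ ((binomialCon J).refl c)⟩
  · rintro ⟨v, hvu, hJ⟩
    exact ⟨u, ⟨v, hvu.symm, hJ⟩, le_rfl⟩

theorem binomialCon_le_ker_weight {a : Fin n → Fin d → ℤ} {J : Ideal (MvPolynomial (Fin n) K)}
    (hJ : IsAHomogPureDiff K a J) : binomialCon J ≤ AddCon.ker (Finsupp.weight a) := by
  obtain ⟨S, hS, rfl⟩ := hJ
  refine binomialCon_span_le _ fun f hf => ?_
  obtain ⟨p, q, hpq, rfl⟩ := hS f hf
  exact ⟨p, q, by rwa [AddCon.ker_rel, ← degA_eq_weight], rfl⟩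

theorem gEdge_add {J : Ideal (MvPolynomial (Fin n) K)} {p q w : Fin n →₀ ℕ}
    (hne : p + w ≠ q + w) (hw : w ≠ 0) (hpq : binomialCon J p q) :
    GEdge K J (p + w) (q + w) := by
  obtain ⟨i, hi⟩ := Finsupp.support_nonempty_iff.mpr hw
  refine ⟨hne, Finset.not_disjoint_iff.mpr ⟨i, ?_, ?_⟩, w, hw, le_add_self, le_add_self, ?_⟩
  · simp only [Finsupp.mem_support_iff, Finsupp.add_apply] at hi ⊢; omega
  · simp only [Finsupp.mem_support_iff, Finsupp.add_apply] at hi ⊢; omega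
  · rw [add_tsub_cancel_right, add_tsub_cancel_right]
    exact hpq

theorem binomialCon_span_binomialsAvoiding_of_gEdge {J : Ideal (MvPolynomial (Fin n) K)}
    {u v : Fin n →₀ ℕ} (h : GEdge K J u v) :
    binomialCon (Ideal.span (binomialsAvoiding J u)) u v := by
  obtain ⟨-, -, w, hw, hwu, hwv, hJ⟩ := h
  obtain ⟨u', rfl⟩ : ∃ u', u = u' + w := ⟨u - w, (tsub_add_cancel_of_le hwu).symm⟩
  obtain ⟨v', rfl⟩ : ∃ v', v = v' + w := ⟨v - w, (tsub_add_cancel_of_le hwv).symm⟩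
  rw [add_tsub_cancel_right, add_tsub_cancel_right] at hJ
  set c := binomialCon (Ideal.span (binomialsAvoiding J (u' + w)))
  have hgen (p q) (hp : p ≠ u' + w) (hq : q ≠ u' + w) (hpq : binomialCon J p q) : c p q :=
    Ideal.subset_span ⟨p, q, hp, hq, hpq, rfl⟩
  have hshift {p q} (hpq : binomialCon J p q) : binomialCon J (p + w) (q + w) :=
    (binomialCon J).add hpq ((binomialCon J).refl w)
  have hne (x k : Fin n →₀ ℕ) (hk : k ≠ 0) : x + k ≠ x := fun h => hk (add_eq_left.mp h)
  by_cases hv' : v' = u' + w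
  · subst hv'
    -- `x^{u'} ≡ x^{u'+2w}` and `x^{u'+2w} ≡ x^{u'+3w}` hold modulo `J` and avoid `x^{u'+w}`.
    have h1 : c u' (u' + w + w) :=
      hgen _ _ (hne u' w hw).symm (hne _ w hw) ((binomialCon J).trans hJ (hshift hJ))
    have h2 : c (u' + w + w) (u' + w + w + w) := by
      refine hgen _ _ (hne _ w hw) ?_ (hshift (hshift hJ))
      rw [add_assoc (u' + w)]
      exact hne _ _ (by simpa using hw)
    exact c.trans (c.add h1 (c.refl w)) (c.symm h2)
  · exact c.add (hgen u' v' (hne u' w hw).symm hv' hJ) (c.refl w)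

theorem binomialCon_le_span_binomialsAvoiding {J : Ideal (MvPolynomial (Fin n) K)}
    {u v : Fin n →₀ ℕ} (hvu : v ≠ u) (huv : binomialCon (Ideal.span (binomialsAvoiding J u)) u v) :
    binomialCon J ≤ binomialCon (Ideal.span (binomialsAvoiding J u)) := by
  set c := binomialCon (Ideal.span (binomialsAvoiding J u))
  have hgen (p q) (hp : p ≠ u) (hq : q ≠ u) (hpq : binomialCon J p q) : c p q :=
    Ideal.subset_span ⟨p, q, hp, hq, hpq, rfl⟩
  have hJuv : binomialCon J u v :=
    binomialCon_mono (Ideal.span_le.mpr (binomialsAvoiding_subset J u)) huv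
  have hto (p) (hpu : binomialCon J p u) : c p u := by
    rcases eq_or_ne p u with rfl | hp
    · exact c.refl p
    · exact c.trans (hgen p v hp hvu ((binomialCon J).trans hpu hJuv)) (c.symm huv)
  intro p q hpq
  rcases eq_or_ne p u with rfl | hp
  · exact c.symm (hto q ((binomialCon J).symm hpq))
  rcases eq_or_ne q u with rfl | hq
  · exact hto p hpq
  exact hgen p q hp hq hpq

theorem isBinomGenSet_binomialsAvoiding {J : Ideal (MvPolynomial (Fin n) K)}
    {S : Set (MvPolynomial (Fin n) K)} (hS : IsBinomGenSet K J S) {u v : Fin n →₀ ℕ}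
    (h : GEdge K J u v) : IsBinomGenSet K J (binomialsAvoiding J u) := by
  refine ⟨?_, le_antisymm (Ideal.span_le.mpr (binomialsAvoiding_subset J u)) ?_⟩
  · rintro f ⟨p, q, -, -, -, rfl⟩
    exact ⟨p, q, rfl⟩
  · have hle := binomialCon_le_span_binomialsAvoiding h.1.symm
      (binomialCon_span_binomialsAvoiding_of_gEdge h)
    conv_lhs => rw [← hS.2]
    refine Ideal.span_le.mpr fun f hf => ?_
    obtain ⟨p, q, rfl⟩ := hS.1 f hf
    exact hle (hS.2 ▸ Ideal.subset_span hf)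

theorem not_gEdge_of_indispMonomial {J : Ideal (MvPolynomial (Fin n) K)}
    {S : Set (MvPolynomial (Fin n) K)} (hS : IsBinomGenSet K J S) {u : Fin n →₀ ℕ}
    (hu : IndispMonomial K J u) (v : Fin n →₀ ℕ) : ¬ GEdge K J u v := fun h => by
  obtain ⟨f, ⟨p, q, hp, hq, -, rfl⟩, hf⟩ := hu _ (isBinomGenSet_binomialsAvoiding hS h)
  rw [mem_support_monomial_sub_monomial] at hf
  grind

theorem monomial_mem_MIdeal_of_indispMonomial {J : Ideal (MvPolynomial (Fin n) K)}
    {S : Set (MvPolynomial (Fin n) K)} (hS : IsBinomGenSet K J S) {u : Fin n →₀ ℕ}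
    (hu : IndispMonomial K J u) : monomial u (1 : K) ∈ MIdeal K J := by
  obtain ⟨f, hfS, hf⟩ := hu S hS
  obtain ⟨p, q, rfl⟩ := hS.1 f hfS
  have hpq : binomialCon J p q := hS.2 ▸ Ideal.subset_span hfS
  obtain ⟨hne, rfl | rfl⟩ := mem_support_monomial_sub_monomial.mp hf
  · exact monomial_mem_MIdeal_iff.mpr ⟨q, hne.symm, hpq⟩
  · exact monomial_mem_MIdeal_iff.mpr ⟨p, hne, (binomialCon J).symm hpq⟩

section Isolated

variable {a : Fin n → Fin d → ℤ} {J : Ideal (MvPolynomial (Fin n) K)} {u : Fin n →₀ ℕ}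

theorem add_eq_of_forall_not_gEdge (hdeg : binomialCon J ≤ AddCon.ker (Finsupp.weight a))
    (hu : ∀ v, monomial v (1 : K) ∈ MIdeal K J → degA a v = degA a u → ¬ GEdge K J u v)
    {p q w : Fin n →₀ ℕ} (hpq : binomialCon J p q) (hw : w ≠ 0) (hpw : p + w = u) :
    q + w = u := by
  subst hpw
  by_contra hne
  have hJ : binomialCon J (p + w) (q + w) := (binomialCon J).add hpq ((binomialCon J).refl w)
  refine hu (q + w) (monomial_mem_MIdeal_iff.mpr ⟨p + w, Ne.symm hne, (binomialCon J).symm hJ⟩)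
    ?_ (gEdge_add (Ne.symm hne) hw hpq)
  rw [degA_eq_weight]
  exact ((AddCon.ker_rel _).mp (hdeg hJ)).symm

theorem indispMonomial_of_forall_not_gEdge (hdeg : binomialCon J ≤ AddCon.ker (Finsupp.weight a))
    (hM : monomial u (1 : K) ∈ MIdeal K J)
    (hu : ∀ v, monomial v (1 : K) ∈ MIdeal K J → degA a v = degA a u → ¬ GEdge K J u v) :
    IndispMonomial K J u := by
  intro S hS
  by_contra! hSu
  obtain ⟨v, hvu, huv⟩ := monomial_mem_MIdeal_iff.mp hM
  have hsyn : binomialCon J ≤ AddCon.syntactic {u} := by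
    rw [← hS.2]
    refine binomialCon_span_le _ fun f hf => ?_
    obtain ⟨p, q, rfl⟩ := hS.1 f hf
    have hpq : binomialCon J p q := hS.2 ▸ Ideal.subset_span hf
    refine ⟨p, q, fun w => ?_, rfl⟩
    simp only [Set.mem_singleton_iff]
    rcases eq_or_ne w 0 with rfl | hw
    · have := hSu _ hf
      rw [mem_support_monomial_sub_monomial] at this
      grind
    · exact ⟨add_eq_of_forall_not_gEdge hdeg hu hpq hw,
        add_eq_of_forall_not_gEdge hdeg hu ((binomialCon J).symm hpq) hw⟩
  exact hvu (by simpa using (hsyn huv 0).mp (by simp))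

end Isolated

end Indispensable

theorem statement4 {n d : ℕ} (a : Fin n → Fin d → ℤ)
    (J : Ideal (MvPolynomial (Fin n) K)) (hJ : IsAHomogPureDiff K a J)
    (u : Fin n →₀ ℕ) :
    IndispMonomial K J u ↔
      ((monomial u (1 : K) : MvPolynomial (Fin n) K) ∈ MIdeal K J ∧
        ∀ v : Fin n →₀ ℕ,
          (monomial v (1 : K) : MvPolynomial (Fin n) K) ∈ MIdeal K J →
          degA a v = degA a u → ¬ GEdge K J u v) := by
  obtain ⟨S, hS, hJS⟩ := id hJ
  have hgen : IsBinomGenSet K J S :=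
    ⟨fun f hf => by obtain ⟨p, q, -, rfl⟩ := hS f hf; exact ⟨p, q, rfl⟩, hJS.symm⟩
  refine ⟨fun hu => ⟨monomial_mem_MIdeal_of_indispMonomial hgen hu,
    fun v _ _ => not_gEdge_of_indispMonomial hgen hu v⟩, fun ⟨hM, hiso⟩ => ?_⟩
  exact indispMonomial_of_forall_not_gEdge (binomialCon_le_ker_weight hJ) hM hiso
end

section
/- Let x^u − x^v be a nonzero binomial of J and b = deg_A(x^u) = deg_A(x^v). If the graph G_b(J) consists exactly of the two isolated vertices x^u and x^v (i.e., every monomial of M_J of A-degree b equals x^u or x^v, and they are not joined by an edge), then x^u − x^v is an indispensable binomial of J. -/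
open MvPolynomial

variable (K : Type*) [Field K]

/-
Write `x^u` for the monomial `monomial u 1`. Let `S` be any binomial generating set of `J`. Since
`x^u` occurs in `x^u - x^v ∈ (S)`, some monomial `x^p` of some generator `x^p - x^q ∈ S` divides it,
say `u = c + p`. Then `x^{c+p} - x^{c+q} ∈ J`, so `x^{c+q}` lies in `M_J` and, by homogeneity, has
`A`-degree `b`; it differs from `x^u`, hence equals `x^v`. Now `x^c` divides both `x^u` and `x^v`
and `x^{u-c} - x^{v-c} = x^p - x^q ∈ J`, so `c ≠ 0` would join `x^u` and `x^v` by an edge of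
`G_b(J)`. Thus `c = 0` and the generator is `x^u - x^v`, or `x^v - x^u` if it was `x^q` that divided.
-/

namespace MvPolynomial

variable {σ R : Type*}

theorem exists_mem_support_le_of_mem_ideal_span [CommSemiring R] {S : Set (MvPolynomial σ R)}
    {f : MvPolynomial σ R} (hf : f ∈ Ideal.span S) {m : σ →₀ ℕ} (hm : m ∈ f.support) :
    ∃ g ∈ S, ∃ p ∈ g.support, p ≤ m := by
  have hle : Ideal.span S ≤
      Ideal.span ((fun s => monomial s (1 : R)) '' ⋃ g ∈ S, (g.support : Set (σ →₀ ℕ))) :=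
    Ideal.span_le.2 fun g hg => mem_ideal_span_monomial_image.2 fun p hp =>
      ⟨p, Set.mem_biUnion hg hp, le_rfl⟩
  obtain ⟨p, hp, hpm⟩ := mem_ideal_span_monomial_image.1 (hle hf) m hm
  obtain ⟨g, hg, hpg⟩ := Set.mem_iUnion₂.1 hp
  exact ⟨g, hg, p, hpg, hpm⟩

theorem mem_support_monomial_one_sub_monomial_one [CommRing R] [Nontrivial R]
    {p q m : σ →₀ ℕ} :
    m ∈ (monomial p (1 : R) - monomial q 1).support ↔ p ≠ q ∧ (m = p ∨ m = q) := by
  classical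
  rw [mem_support_iff, coeff_sub, coeff_monomial, coeff_monomial]
  by_cases hp : p = m <;> by_cases hq : q = m <;> simp [hp, hq, eq_comm]

theorem monomial_one_add_sub_monomial_one_add_mem [CommRing R] {I : Ideal (MvPolynomial σ R)}
    {p q : σ →₀ ℕ} (h : monomial p (1 : R) - monomial q 1 ∈ I) (c : σ →₀ ℕ) :
    monomial (c + p) (1 : R) - monomial (c + q) 1 ∈ I := by
  simpa only [mul_sub, monomial_mul, one_mul] using I.mul_mem_left (monomial c 1) h

end MvPolynomial

theorem Finsupp.not_disjoint_support_of_le {α : Type*} {w u v : α →₀ ℕ} (hw : w ≠ 0)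
    (hwu : w ≤ u) (hwv : w ≤ v) : ¬Disjoint u.support v.support := fun hdis => by
  obtain ⟨i, hi⟩ := Finsupp.support_nonempty_iff.2 hw
  exact Finset.disjoint_left.1 hdis (Finsupp.support_mono hwu hi) (Finsupp.support_mono hwv hi)

theorem degA_add {n d : ℕ} (a : Fin n → Fin d → ℤ) (u v : Fin n →₀ ℕ) :
    degA a (u + v) = degA a u + degA a v := by
  simp only [degA, Finsupp.add_apply, Nat.cast_add, add_smul, Finset.sum_add_distrib]

/-- The homomorphism `x_i ↦ t^{a_i}` into the Laurent polynomial ring `K[t^{±1}]`, whose kernel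
is the toric ideal. -/
noncomputable def toricHom {n d : ℕ} (a : Fin n → Fin d → ℤ) :
    MvPolynomial (Fin n) K →ₐ[K] AddMonoidAlgebra K (Fin d → ℤ) :=
  aeval fun i => AddMonoidAlgebra.single (a i) 1

theorem toricHom_monomial {n d : ℕ} (a : Fin n → Fin d → ℤ) (u : Fin n →₀ ℕ) :
    toricHom K a (monomial u 1) = AddMonoidAlgebra.single (degA a u) 1 := by
  rw [toricHom, aeval_monomial, map_one, one_mul, Finsupp.prod_fintype _ _ fun i => pow_zero _]
  simp only [AddMonoidAlgebra.single_pow, one_pow, ← Nat.cast_smul_eq_nsmul ℤ]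
  rw [AddMonoidAlgebra.prod_single, Finset.prod_const_one, degA]

theorem le_ker_toricHom {n d : ℕ} {a : Fin n → Fin d → ℤ} {J : Ideal (MvPolynomial (Fin n) K)}
    (hJ : IsAHomogPureDiff K a J) : J ≤ RingHom.ker (toricHom K a) := by
  obtain ⟨S, hS, rfl⟩ := hJ
  refine Ideal.span_le.2 fun f hf => ?_
  obtain ⟨u, v, hd, rfl⟩ := hS f hf
  simp [RingHom.mem_ker, toricHom_monomial, hd]

theorem degA_eq_of_monomial_sub_mem {n d : ℕ} {a : Fin n → Fin d → ℤ}
    {J : Ideal (MvPolynomial (Fin n) K)} (hJ : IsAHomogPureDiff K a J) {p q : Fin n →₀ ℕ}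
    (h : monomial p (1 : K) - monomial q 1 ∈ J) : degA a p = degA a q := by
  have h0 := le_ker_toricHom K hJ h
  rw [RingHom.mem_ker, map_sub, toricHom_monomial, toricHom_monomial, sub_eq_zero] at h0
  exact (AddMonoidAlgebra.single_left_inj one_ne_zero).1 h0

theorem monomial_mem_MIdeal {n : ℕ} {J : Ideal (MvPolynomial (Fin n) K)} {p q : Fin n →₀ ℕ}
    (hpq : p ≠ q) (h : monomial p (1 : K) - monomial q 1 ∈ J) : monomial p (1 : K) ∈ MIdeal K J :=
  Ideal.subset_span ⟨p, q, hpq, h, rfl⟩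

theorem gEdge_of_le {n : ℕ} {J : Ideal (MvPolynomial (Fin n) K)} {u v w : Fin n →₀ ℕ}
    (huv : u ≠ v) (hw : w ≠ 0) (hwu : w ≤ u) (hwv : w ≤ v)
    (h : monomial (u - w) (1 : K) - monomial (v - w) 1 ∈ J) : GEdge K J u v :=
  ⟨huv, Finsupp.not_disjoint_support_of_le hw hwu hwv, w, hw, hwu, hwv, h⟩

theorem eq_of_monomial_sub_mem_of_le {n d : ℕ} {a : Fin n → Fin d → ℤ}
    {J : Ideal (MvPolynomial (Fin n) K)} (hJ : IsAHomogPureDiff K a J) {u v : Fin n →₀ ℕ}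
    (huv : u ≠ v)
    (hverts : ∀ w : Fin n →₀ ℕ, monomial w (1 : K) ∈ MIdeal K J →
      degA a w = degA a u → w = u ∨ w = v)
    (hnoedge : ¬GEdge K J u v) {p q : Fin n →₀ ℕ} (hpq : p ≠ q)
    (h : monomial p (1 : K) - monomial q 1 ∈ J) (hpu : p ≤ u) : p = u ∧ q = v := by
  obtain ⟨c, rfl⟩ : ∃ c, u = c + p := ⟨u - p, (tsub_add_cancel_of_le hpu).symm⟩
  have hcq : c + q ≠ c + p := fun h' => hpq (add_left_cancel h').symm
  have hshift := monomial_one_add_sub_monomial_one_add_mem h c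
  have hM : monomial (c + q) (1 : K) ∈ MIdeal K J :=
    monomial_mem_MIdeal K hcq (by simpa only [neg_sub] using J.neg_mem hshift)
  have hdeg : degA a (c + q) = degA a (c + p) := by
    rw [degA_add, degA_add, degA_eq_of_monomial_sub_mem K hJ h]
  obtain rfl : c + q = v := (hverts _ hM hdeg).resolve_left hcq
  obtain rfl : c = 0 := by
    by_contra hc
    refine hnoedge (gEdge_of_le K huv hc le_self_add le_self_add ?_)
    simpa only [add_tsub_cancel_left] using h
  simp only [zero_add, and_self]

theorem statement5 {n d : ℕ} (a : Fin n → Fin d → ℤ)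
    (J : Ideal (MvPolynomial (Fin n) K)) (hJ : IsAHomogPureDiff K a J)
    (u v : Fin n →₀ ℕ) (huv : u ≠ v)
    (hmem : (monomial u (1 : K) - monomial v (1 : K) : MvPolynomial (Fin n) K) ∈ J)
    (hverts : ∀ w : Fin n →₀ ℕ,
      (monomial w (1 : K) : MvPolynomial (Fin n) K) ∈ MIdeal K J →
      degA a w = degA a u → w = u ∨ w = v)
    (hnoedge : ¬ GEdge K J u v) :
    IndispBinomial K J (monomial u (1 : K) - monomial v (1 : K)) := by
  rintro S ⟨hbinom, rfl⟩
  have hu : u ∈ (monomial u (1 : K) - monomial v 1).support :=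
    mem_support_monomial_one_sub_monomial_one.2 ⟨huv, .inl rfl⟩
  obtain ⟨f, hfS, r, hr, hru⟩ := exists_mem_support_le_of_mem_ideal_span hmem hu
  obtain ⟨p, q, rfl⟩ := hbinom f hfS
  have hf : monomial p (1 : K) - monomial q 1 ∈ Ideal.span S := Ideal.subset_span hfS
  obtain ⟨hpq, rfl | rfl⟩ := mem_support_monomial_one_sub_monomial_one.1 hr
  · obtain ⟨rfl, rfl⟩ := eq_of_monomial_sub_mem_of_le K hJ huv hverts hnoedge hpq hf hru
    exact .inl hfS
  · have hf' : monomial r (1 : K) - monomial p 1 ∈ Ideal.span S := by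
      simpa only [neg_sub] using (Ideal.span S).neg_mem hf
    obtain ⟨rfl, rfl⟩ := eq_of_monomial_sub_mem_of_le K hJ huv hverts hnoedge hpq.symm hf' hru
    exact .inr (by simpa only [neg_sub] using hfS)
end

section
/- If f = x^u − x^v ∈ J is an indispensable binomial of the toric ideal I_A, then f is an indispensable binomial of J. -/
open MvPolynomial

variable (K : Type*) [Field K]

/-- If `f = x^u - x^v ∈ J` is an indispensable binomial of the toric ideal
`I_A`, then `f` is an indispensable binomial of `J`. -/
theorem statement6 {n d : ℕ} (a : Fin n → Fin d → ℤ) (hA : NoUnits a)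
    (J : Ideal (MvPolynomial (Fin n) K)) (hJ : IsAHomogPureDiff K a J)
    (u v : Fin n →₀ ℕ)
    (hmem : (monomial u (1 : K) - monomial v (1 : K) : MvPolynomial (Fin n) K) ∈ J)
    (hind : IndispBinomial K (toricIdeal K a) (monomial u (1 : K) - monomial v (1 : K))) :
    IndispBinomial K J (monomial u (1 : K) - monomial v (1 : K)) := by
  classical
  intro S hS
  obtain ⟨hSbin, hSspan⟩ := hS
  obtain ⟨S₀, hS₀, hJeq⟩ := hJ
  set f : MvPolynomial (Fin n) K := monomial u (1 : K) - monomial v (1 : K) with hf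
  set G : Set (MvPolynomial (Fin n) K) :=
    { g | ∃ p q : Fin n →₀ ℕ, degA a p = degA a q ∧
      g = monomial p (1 : K) - monomial q (1 : K) } with hG
  have hJle : J ≤ toricIdeal K a := by
    rw [hJeq, toricIdeal]
    exact Ideal.span_mono (fun g hg => hS₀ g hg)
  set T : Set (MvPolynomial (Fin n) K) := S ∪ (G \ {f, -f}) with hT
  have hfS : f ∈ Ideal.span T := by
    have : f ∈ Ideal.span S := hSspan ▸ hmem
    exact Ideal.span_mono Set.subset_union_left this
  have hTgen : IsBinomGenSet K (toricIdeal K a) T := by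
    constructor
    · rintro g (hg | ⟨⟨p, q, -, rfl⟩, -⟩)
      · exact hSbin g hg
      · exact ⟨p, q, rfl⟩
    · apply le_antisymm
      · rw [Ideal.span_le]
        rintro g (hg | ⟨hg, -⟩)
        · exact hJle (hSspan ▸ Ideal.subset_span hg)
        · exact Ideal.subset_span hg
      · rw [toricIdeal, Ideal.span_le]
        intro g hg
        by_cases h1 : g = f
        · exact h1 ▸ hfS
        by_cases h2 : g = -f
        · exact h2 ▸ neg_mem hfS
        · exact Ideal.subset_span (Or.inr ⟨hg, by simp [h1, h2]⟩)
  rcases hind T hTgen with h | h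
  · rcases h with h | ⟨-, h⟩
    · exact Or.inl h
    · exact absurd (by simp : f ∈ ({f, -f} : Set _)) h
  · rcases h with h | ⟨-, h⟩
    · exact Or.inr h
    · exact absurd (by simp : -f ∈ ({f, -f} : Set _)) h
end

section
/- Let G be a connected simple graph on the vertex set {1,…,n} and let J_G be its binomial edge ideal. Then every generator f_{ij} = x_i y_j − x_j y_i (with i < j and {i,j} an edge of G) is an indispensable binomial of J_G; consequently J_G has a unique minimal system of binomial generators. -/
open MvPolynomial

variable (K : Type*) [Field K]

/-- The binomial `f_{ij} = x_i y_j - x_j y_i` in `k[x_1,…,x_n,y_1,…,y_n]`, where the variable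
`x_i` is indexed by `Sum.inl i` and `y_i` by `Sum.inr i`. -/
noncomputable def fij {n : ℕ} (i j : Fin n) : MvPolynomial (Fin n ⊕ Fin n) K :=
  X (Sum.inl i) * X (Sum.inr j) - X (Sum.inl j) * X (Sum.inr i)

/-- The binomial edge ideal `J_G` of a simple graph `G` on `{1,…,n}`: the ideal generated by the
binomials `f_{ij} = x_i y_j - x_j y_i` for `i < j` with `{i,j}` an edge of `G`. -/
noncomputable def binomialEdgeIdeal {n : ℕ} (G : SimpleGraph (Fin n)) :
    Ideal (MvPolynomial (Fin n ⊕ Fin n) K) :=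
  Ideal.span { f | ∃ i j : Fin n, i < j ∧ G.Adj i j ∧ f = fij K i j }

/-- The exponent of the monomial `x_i y_j`. -/
noncomputable def AA {n : ℕ} (i j : Fin n) : (Fin n ⊕ Fin n) →₀ ℕ :=
  Finsupp.single (Sum.inl i) 1 + Finsupp.single (Sum.inr j) 1

lemma fij_eq {n : ℕ} (i j : Fin n) :
    fij K i j = monomial (AA i j) (1 : K) - monomial (AA j i) (1 : K) := by
  unfold fij AA X
  rw [monomial_mul, monomial_mul, one_mul]

lemma AA_le_AA {n : ℕ} {k l i j : Fin n} : AA k l ≤ AA i j ↔ k = i ∧ l = j := by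
  constructor
  · intro h
    have h1 := Finsupp.le_def.mp h (Sum.inl k)
    have h2 := Finsupp.le_def.mp h (Sum.inr l)
    simp only [AA, Finsupp.add_apply, Finsupp.single_apply] at h1 h2
    constructor
    · by_contra hk
      have hni : ¬ ((Sum.inl i : Fin n ⊕ Fin n) = Sum.inl k) := by
        simp only [Sum.inl.injEq]
        exact fun h' => hk h'.symm
      simp [hni] at h1
    · by_contra hl
      have hnj : ¬ ((Sum.inr j : Fin n ⊕ Fin n) = Sum.inr l) := by
        simp only [Sum.inr.injEq]
        exact fun h' => hl h'.symm
      simp [hnj] at h2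
  · rintro ⟨rfl, rfl⟩; exact le_refl _

lemma AA_ne {n : ℕ} {i j : Fin n} (h : i ≠ j) : AA i j ≠ AA j i := by
  intro he
  exact h (AA_le_AA.mp he.le).1

/-- Key induction: a linear functional vanishing on all multiples of the generators
vanishes on the binomial edge ideal. -/
lemma key_vanish {n : ℕ} (G : SimpleGraph (Fin n))
    (L : MvPolynomial (Fin n ⊕ Fin n) K →ₗ[K] K)
    (h : ∀ g : MvPolynomial (Fin n ⊕ Fin n) K, ∀ k l : Fin n, k < l → G.Adj k l →
      L (g * fij K k l) = 0)
    {p : MvPolynomial (Fin n ⊕ Fin n) K} (hp : p ∈ binomialEdgeIdeal K G) : L p = 0 := by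
  have H : ∀ g : MvPolynomial (Fin n ⊕ Fin n) K, L (g * p) = 0 := by
    refine Submodule.span_induction (p := fun x _ => ∀ g, L (g * x) = 0) ?_ ?_ ?_ ?_ hp
    · rintro x ⟨k, l, hkl, hadj, rfl⟩ g
      exact h g k l hkl hadj
    · intro g; simp
    · intro x y hx hy px py g
      rw [mul_add, map_add, px g, py g, add_zero]
    · intro a x hx px g
      rw [smul_eq_mul, ← mul_assoc]
      exact px (g * a)
  simpa using H 1

lemma coeff_vanish {n : ℕ} (G : SimpleGraph (Fin n)) (u : (Fin n ⊕ Fin n) →₀ ℕ)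
    (hu : ∀ k l : Fin n, k < l → G.Adj k l → ¬ AA k l ≤ u ∧ ¬ AA l k ≤ u)
    {p : MvPolynomial (Fin n ⊕ Fin n) K} (hp : p ∈ binomialEdgeIdeal K G) :
    coeff u p = 0 := by
  refine key_vanish K G (lcoeff K u) ?_ hp
  intro g k l hkl hadj
  obtain ⟨h1, h2⟩ := hu k l hkl hadj
  simp only [lcoeff_apply, fij_eq, mul_sub, coeff_sub, coeff_mul_monomial',
    if_neg h1, if_neg h2, sub_zero]

lemma coeff_pair {n : ℕ} (G : SimpleGraph (Fin n)) (i j : Fin n) (hij : i < j)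
    {p : MvPolynomial (Fin n ⊕ Fin n) K} (hp : p ∈ binomialEdgeIdeal K G) :
    coeff (AA i j) p + coeff (AA j i) p = 0 := by
  refine key_vanish K G (lcoeff K (AA i j) + lcoeff K (AA j i)) ?_ hp
  intro g k l hkl hadj
  have hlkij : ¬ AA l k ≤ AA i j := by
    intro hle
    obtain ⟨rfl, rfl⟩ := AA_le_AA.mp hle
    exact absurd hkl (not_lt.mpr hij.le)
  have hklji : ¬ AA k l ≤ AA j i := by
    intro hle
    obtain ⟨rfl, rfl⟩ := AA_le_AA.mp hle
    exact absurd hkl (not_lt.mpr hij.le)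
  simp only [LinearMap.add_apply, lcoeff_apply, fij_eq, mul_sub, coeff_sub,
    coeff_mul_monomial', if_neg hlkij, if_neg hklji, sub_zero, zero_sub]
  by_cases hkl' : k = i ∧ l = j
  · obtain ⟨rfl, rfl⟩ := hkl'
    rw [if_pos le_rfl, if_pos le_rfl, tsub_self, tsub_self]
    ring
  · have h1 : ¬ AA k l ≤ AA i j := fun hle => hkl' (AA_le_AA.mp hle)
    have h2 : ¬ AA l k ≤ AA j i := fun hle => by
      obtain ⟨rfl, rfl⟩ := AA_le_AA.mp hle
      exact hkl' ⟨rfl, rfl⟩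
    rw [if_neg h1, if_neg h2]
    ring

/-- Any nonzero binomial in `J_G` one of whose monomials divides `x_i y_j`
must be `f_{ij}` itself. -/
lemma binom_eq_fij {n : ℕ} (G : SimpleGraph (Fin n)) (i j : Fin n) (hij : i < j)
    {u v : (Fin n ⊕ Fin n) →₀ ℕ}
    (hs : (monomial u (1 : K) - monomial v (1 : K)) ∈ binomialEdgeIdeal K G)
    (huv : u ≠ v) (hu : u ≤ AA i j) :
    monomial u (1 : K) - monomial v (1 : K) = fij K i j := by
  by_cases hA : u = AA i j
  · subst hA
    have hp := coeff_pair K G i j hij hs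
    have hne : AA i j ≠ AA j i := AA_ne hij.ne
    have hvA : v ≠ AA i j := fun h => huv h.symm
    by_cases hvB : v = AA j i
    · rw [fij_eq, hvB]
    · exfalso
      simp [coeff_sub, coeff_monomial, hvA, hne, hvB] at hp
  · exfalso
    have h0 : coeff u (monomial u (1 : K) - monomial v (1 : K)) = 0 := by
      refine coeff_vanish K G u ?_ hs
      intro k l hkl hadj
      constructor
      · intro hle
        obtain ⟨rfl, rfl⟩ := AA_le_AA.mp (hle.trans hu)
        exact hA (le_antisymm hu hle)
      · intro hle
        obtain ⟨rfl, rfl⟩ := AA_le_AA.mp (hle.trans hu)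
        exact absurd hkl (not_lt.mpr hij.le)
    have hvu : v ≠ u := fun h => huv h.symm
    simp [coeff_sub, coeff_monomial, hvu] at h0

lemma fij_indisp {n : ℕ} (G : SimpleGraph (Fin n)) (i j : Fin n) (hij : i < j)
    (hadj : G.Adj i j) : IndispBinomial K (binomialEdgeIdeal K G) (fij K i j) := by
  rintro S ⟨hSbin, hSspan⟩
  have hfJ : fij K i j ∈ Ideal.span S := by
    rw [hSspan]
    exact Ideal.subset_span ⟨i, j, hij, hadj, rfl⟩
  obtain ⟨c, hcs, hsum⟩ := Submodule.mem_span_set.mp hfJ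
  have hcf : coeff (AA i j) (fij K i j) = 1 := by
    have hne : AA j i ≠ AA i j := AA_ne hij.ne'
    simp [fij_eq, coeff_sub, coeff_monomial, hne]
  have hsum' : ∑ s ∈ c.support, coeff (AA i j) (c s * s) = 1 := by
    rw [← hcf, ← hsum]
    simp only [Finsupp.sum, coeff_sum, smul_eq_mul]
  have hex : ∃ s ∈ c.support, coeff (AA i j) (c s * s) ≠ 0 := by
    by_contra hall
    push_neg at hall
    rw [Finset.sum_eq_zero hall] at hsum'
    exact one_ne_zero hsum'.symm
  obtain ⟨s, hsc, hcoe⟩ := hex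
  have hsS : s ∈ S := hcs hsc
  obtain ⟨u, v, rfl⟩ := hSbin s hsS
  have hsJ : (monomial u (1 : K) - monomial v 1) ∈ binomialEdgeIdeal K G := by
    rw [← hSspan]
    exact Ideal.subset_span hsS
  have huv : u ≠ v := by
    rintro rfl
    simp at hcoe
  rw [mul_sub, coeff_sub, coeff_mul_monomial', coeff_mul_monomial'] at hcoe
  by_cases hu : u ≤ AA i j
  · left
    rwa [← binom_eq_fij K G i j hij hsJ huv hu]
  · right
    have hv : v ≤ AA i j := by
      by_contra hv
      rw [if_neg hu, if_neg hv, sub_zero] at hcoe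
      exact hcoe rfl
    have hsJ' : (monomial v (1 : K) - monomial u 1) ∈ binomialEdgeIdeal K G := by
      have := (binomialEdgeIdeal K G).neg_mem hsJ
      simpa using this
    have h2 := binom_eq_fij K G i j hij hsJ' huv.symm hv
    have heq : -(fij K i j) = monomial u (1 : K) - monomial v 1 := by
      rw [← h2]; ring
    rwa [heq]

/-- Let `G` be a connected simple graph on `{1,…,n}` and `J_G` its binomial edge
ideal. Every generator `f_{ij} = x_i y_j - x_j y_i` (`i < j`, `{i,j}` an edge of `G`) is an
indispensable binomial of `J_G`; consequently `J_G` is generated by its indispensable binomials,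
i.e. it has a unique minimal system of binomial generators. -/
theorem statement7 {n : ℕ} (G : SimpleGraph (Fin n)) (hG : G.Connected) :
    (∀ i j : Fin n, i < j → G.Adj i j →
      IndispBinomial K (binomialEdgeIdeal K G) (fij K i j)) ∧
    binomialEdgeIdeal K G =
      Ideal.span { f | IndispBinomial K (binomialEdgeIdeal K G) f } := by
  constructor
  · exact fun i j hij hadj => fij_indisp K G i j hij hadj
  · apply le_antisymm
    · rw [binomialEdgeIdeal]
      apply Ideal.span_mono
      rintro f ⟨i, j, hij, hadj, rfl⟩
      exact fij_indisp K G i j hij hadj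
    · rw [Ideal.span_le]
      intro f hf
      have hgen : IsBinomGenSet K (binomialEdgeIdeal K G)
          { f | ∃ i j : Fin n, i < j ∧ G.Adj i j ∧ f = fij K i j } := by
        constructor
        · rintro g ⟨i, j, _, _, rfl⟩
          exact ⟨AA i j, AA j i, fij_eq K i j⟩
        · rfl
      rcases hf _ hgen with h | h
      · exact Ideal.subset_span h
      · have hnf : -f ∈ binomialEdgeIdeal K G := Ideal.subset_span h
        simpa using (binomialEdgeIdeal K G).neg_mem hnf
end

section
/- For every i ∈ {1,…,n}, the monomial x_i^{c_i} is an indispensable monomial of I_A, i.e., every set of binomials generating I_A contains a binomial one of whose monomials is x_i^{c_i}. -/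
open MvPolynomial Finsupp

variable (K : Type*) [Field K]

/-- The `A`-degree of an exponent vector `u ∈ ℕ^n` with respect to `a_1, …, a_n ∈ ℕ`, namely
`∑ i, u i * a i`. -/
def degN {n : ℕ} (a : Fin n → ℕ) (u : Fin n →₀ ℕ) : ℕ :=
  ∑ i, u i * a i

/-- The defining ideal `I_A` of the monomial curve `x_i = t^{a_i}`: the ideal generated by all
binomials `x^u - x^v` with `∑ u_i a_i = ∑ v_i a_i` (equivalently, the kernel of
`k[x_1,…,x_n] → k[t]`, `x_i ↦ t^{a_i}`). -/
noncomputable def curveIdeal {n : ℕ} (a : Fin n → ℕ) : Ideal (MvPolynomial (Fin n) K) :=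
  Ideal.span { f | ∃ u v : Fin n →₀ ℕ, degN a u = degN a v ∧
    f = monomial u (1 : K) - monomial v (1 : K) }

/-- `c` is the critical exponent of the variable `x_i`: the least positive integer `c` with
`c * a_i ∈ ∑_{j ≠ i} ℕ a_j`. -/
def IsCritExp {n : ℕ} (a : Fin n → ℕ) (i : Fin n) (c : ℕ) : Prop :=
  IsLeast { m : ℕ | 0 < m ∧ ∃ u : Fin n →₀ ℕ, u i = 0 ∧ m * a i = degN a u } c

/-- `f` is a critical binomial of `I_A` with respect to `x_i` (where `c` is the vector of
critical exponents): `f = x_i^{c_i} - ∏_{j ≠ i} x_j^{u_{ij}} ∈ I_A`. -/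
def IsCritBinom {n : ℕ} (a c : Fin n → ℕ) (i : Fin n) (f : MvPolynomial (Fin n) K) : Prop :=
  ∃ u : Fin n →₀ ℕ, u i = 0 ∧
    f = monomial (Finsupp.single i (c i)) (1 : K) - monomial u (1 : K) ∧
    f ∈ curveIdeal K a

/-- The critical ideal `C_A`: the ideal generated by all critical binomials of `I_A`. -/
noncomputable def criticalIdeal {n : ℕ} (a c : Fin n → ℕ) :
    Ideal (MvPolynomial (Fin n) K) :=
  Ideal.span { f | ∃ i : Fin n, IsCritBinom K a c i f }

/-- `x^u - x^v` is a primitive binomial of `I_A`: it is a nonzero binomial of `I_A` and there is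
no other nonzero binomial `x^{u'} - x^{v'} ∈ I_A` with `x^{u'} ∣ x^u` and `x^{v'} ∣ x^v`. -/
def IsPrimitive {n : ℕ} (a : Fin n → ℕ) (u v : Fin n →₀ ℕ) : Prop :=
  u ≠ v ∧ (monomial u (1 : K) - monomial v (1 : K)) ∈ curveIdeal K a ∧
  ∀ u' v' : Fin n →₀ ℕ, u' ≤ u → v' ≤ v → u' ≠ v' →
    (monomial u' (1 : K) - monomial v' (1 : K)) ∈ curveIdeal K a → u' = u ∧ v' = v

/-!
Write `w` for the exponent of `x_i^{c_i}`. A critical binomial `x^w - x^u` (with `u_i = 0`) lies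
in `I_A`, so in any binomial generating set `S` some `x^p - x^q ∈ S` has a monomial, say `x^p`,
dividing `x^w`: `p = e·e_i` with `e ≤ c_i`. Binomials of `I_A` are `A`-homogeneous, so
`e a_i = q_i a_i + ∑_{j ≠ i} q_j a_j`. If `q_i ≥ e` this forces `q = p`, impossible; otherwise
`(e - q_i) a_i ∈ ∑_{j ≠ i} ℕ a_j`, and minimality of `c_i` gives `e = c_i`.
-/

namespace MvPolynomial

theorem exists_mem_support_le_of_mem_span {R σ : Type*} [CommSemiring R]
    {S : Set (MvPolynomial σ R)} {f : MvPolynomial σ R} (hf : f ∈ Ideal.span S)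
    {w : σ →₀ ℕ} (hw : w ∈ f.support) : ∃ g ∈ S, ∃ v ∈ g.support, v ≤ w := by
  classical
  induction hf using Submodule.span_induction generalizing w with
  | mem g hg => exact ⟨g, hg, w, hw, le_rfl⟩
  | zero => simp at hw
  | add x y _ _ hx hy =>
    obtain hwx | hwy := Finset.mem_union.1 (support_add hw)
    exacts [hx hwx, hy hwy]
  | smul r x _ hx =>
    obtain ⟨s, -, v, hv, rfl⟩ := Finset.mem_add.1 (support_mul r x hw)
    obtain ⟨g, hg, v', hv', hv'v⟩ := hx hv
    exact ⟨g, hg, v', hv', hv'v.trans le_add_self⟩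

theorem eq_or_eq_of_mem_support_monomial_sub_monomial {R σ : Type*} [CommRing R]
    {p q v : σ →₀ ℕ} (hv : v ∈ (monomial p (1 : R) - monomial q 1).support) :
    v = p ∨ v = q := by
  classical
  rcases Finset.mem_union.1 (support_sub σ _ _ hv) with h | h
  · exact .inl (Finset.mem_singleton.1 (support_monomial_subset h))
  · exact .inr (Finset.mem_singleton.1 (support_monomial_subset h))

end MvPolynomial

section CurveIdeal

variable {n : ℕ}

theorem degN_add (a : Fin n → ℕ) (u v : Fin n →₀ ℕ) :
    degN a (u + v) = degN a u + degN a v := by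
  simp only [degN, Finsupp.add_apply, add_mul, Finset.sum_add_distrib]

theorem degN_single (a : Fin n → ℕ) (i : Fin n) (e : ℕ) :
    degN a (Finsupp.single i e) = e * a i := by
  simp [degN, Finsupp.single_apply]

theorem eq_zero_of_degN_eq_zero {a : Fin n → ℕ} (ha : ∀ j, 0 < a j) {u : Fin n →₀ ℕ}
    (h : degN a u = 0) : u = 0 := by
  ext j
  simpa [(ha j).ne'] using Finset.sum_eq_zero_iff.1 h j (Finset.mem_univ j)

theorem aeval_X_pow_monomial_one {R : Type*} [CommSemiring R] (a : Fin n → ℕ)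
    (u : Fin n →₀ ℕ) :
    aeval (fun j => (Polynomial.X : Polynomial R) ^ a j) (monomial u (1 : R)) =
      Polynomial.X ^ degN a u := by
  rw [aeval_monomial, map_one, one_mul, Finsupp.prod_fintype _ _ (by simp), degN,
    ← Finset.prod_pow_eq_pow_sum]
  simp only [← pow_mul, mul_comm]

theorem degN_eq_of_mem_curveIdeal {a : Fin n → ℕ} {u v : Fin n →₀ ℕ}
    (h : monomial u (1 : K) - monomial v (1 : K) ∈ curveIdeal K a) :
    degN a u = degN a v := by
  let φ := aeval (R := K) fun j => (Polynomial.X : Polynomial K) ^ a j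
  have hker : curveIdeal K a ≤ RingHom.ker φ := by
    rw [curveIdeal, Ideal.span_le]
    rintro f ⟨u', v', hd, rfl⟩
    simp [φ, aeval_X_pow_monomial_one, hd]
  have hφ := hker h
  simp only [RingHom.mem_ker, map_sub, φ, aeval_X_pow_monomial_one, sub_eq_zero] at hφ
  simpa using congrArg Polynomial.natDegree hφ

theorem IsCritExp.eq_single_of_le_single {a : Fin n → ℕ} (ha : ∀ j, 0 < a j) {i : Fin n}
    {c : ℕ} (hc : IsCritExp a i c) {p q : Fin n →₀ ℕ} (hpq : p ≠ q)
    (hd : degN a p = degN a q) (hle : p ≤ Finsupp.single i c) : p = Finsupp.single i c := by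
  have hp : p = Finsupp.single i (p i) := Finsupp.support_subset_singleton.1
    ((Finsupp.support_mono hle).trans Finsupp.support_single_subset)
  have hpc : p i ≤ c := by simpa using hle i
  have hdq : p i * a i = q i * a i + degN a (q.erase i) := by
    rw [← degN_single, ← hp, hd, ← degN_single, ← degN_add, Finsupp.single_add_erase]
  obtain hqp | hqp := le_or_gt (p i) (q i)
  · have hmul := Nat.mul_le_mul_right (a i) hqp
    have hrest : q.erase i = 0 := eq_zero_of_degN_eq_zero ha (by omega)
    have hqi : q i = p i := Nat.eq_of_mul_eq_mul_right (ha i) (by omega)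
    refine absurd ?_ hpq
    rw [← Finsupp.single_add_erase i q, hrest, add_zero, hqi, ← hp]
  · have hmin : c ≤ p i - q i := hc.2 ⟨by omega, q.erase i, Finsupp.erase_same,
      by rw [Nat.sub_mul]; omega⟩
    rw [hp, show p i = c by omega]

end CurveIdeal

theorem statement8 {n : ℕ} (a c : Fin n → ℕ) (ha : ∀ i, 0 < a i)
    (hc : ∀ i, IsCritExp a i (c i)) (i : Fin n) :
    IndispMonomial K (curveIdeal K a) (Finsupp.single i (c i)) := by
  rintro S ⟨hbin, hspan⟩
  obtain ⟨⟨hpos, u, hui, hdu⟩, -⟩ := hc i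
  have hw : Finsupp.single i (c i) ∈ (monomial (Finsupp.single i (c i)) (1 : K) -
      monomial u 1).support := by
    have hne : u ≠ Finsupp.single i (c i) := fun h => by simp [h] at hui; omega
    classical
    simp [coeff_monomial, hne]
  have hcrit : monomial (Finsupp.single i (c i)) (1 : K) - monomial u 1 ∈ Ideal.span S :=
    hspan ▸ Ideal.subset_span ⟨_, u, by rw [degN_single, hdu], rfl⟩
  obtain ⟨g, hgS, v, hv, hvw⟩ := exists_mem_support_le_of_mem_span hcrit hw
  obtain ⟨p, q, rfl⟩ := hbin g hgS
  have hpq : p ≠ q := by rintro rfl; simp at hv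
  have hd := degN_eq_of_mem_curveIdeal K (hspan ▸ Ideal.subset_span hgS)
  refine ⟨_, hgS, ?_⟩
  obtain rfl | rfl := eq_or_eq_of_mem_support_monomial_sub_monomial hv
  · rwa [← (hc i).eq_single_of_le_single ha hpq hd hvw]
  · rwa [← (hc i).eq_single_of_le_single ha hpq.symm hd.symm hvw]
end

section
/- Let f = x_i^{c_i} − Π_{j≠i} x_j^{u_{ij}} be a critical binomial of I_A. Then f is an indispensable binomial of I_A if and only if f is an indispensable binomial of the critical ideal C_A. -/
open MvPolynomial Finsupp

variable (K : Type*) [Field K]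

namespace S9
variable {K}


lemma degN_single {n : ℕ} (a : Fin n → ℕ) (i : Fin n) (m : ℕ) :
    degN a (Finsupp.single i m) = m * a i := by
  unfold degN
  rw [Finset.sum_eq_single i]
  · simp
  · intro j _ hj
    simp [Finsupp.single_apply, Ne.symm hj]
  · simp

lemma aeval_monomial_X {n : ℕ} (a : Fin n → ℕ) (u : Fin n →₀ ℕ) :
    aeval (fun j => (Polynomial.X : Polynomial K) ^ a j) (monomial u (1 : K))
      = Polynomial.X ^ degN a u := by
  rw [aeval_monomial, map_one, one_mul, Finsupp.prod]
  simp_rw [← pow_mul]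
  rw [Finset.prod_pow_eq_pow_sum]
  congr 1
  unfold degN
  rw [Finset.sum_subset (Finset.subset_univ _)]
  · exact Finset.sum_congr rfl (fun j _ => mul_comm _ _)
  · intro j _ hj
    simp [Finsupp.notMem_support_iff.mp hj]

lemma deg_eq_of_mem {n : ℕ} (a : Fin n → ℕ) {p q : Fin n →₀ ℕ} (hpq : p ≠ q)
    (h : (monomial p (1 : K) - monomial q (1 : K)) ∈ curveIdeal K a) :
    degN a p = degN a q := by
  have hker : curveIdeal K a ≤ RingHom.ker
      (aeval (R := K) (fun j => (Polynomial.X : Polynomial K) ^ a j)).toRingHom := by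
    rw [curveIdeal, Ideal.span_le]
    rintro g ⟨u, v, huv, rfl⟩
    simp only [SetLike.mem_coe, RingHom.mem_ker, AlgHom.toRingHom_eq_coe, RingHom.coe_coe,
      map_sub, aeval_monomial_X, huv, sub_self]
  have h0 := hker h
  simp only [SetLike.mem_coe, RingHom.mem_ker, AlgHom.toRingHom_eq_coe, RingHom.coe_coe,
    map_sub, aeval_monomial_X, sub_eq_zero] at h0
  have := congrArg Polynomial.natDegree h0
  simpa [Polynomial.natDegree_X_pow] using this

lemma crit_of_le {n : ℕ} (a c : Fin n → ℕ) (ha : ∀ i, 0 < a i)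
    (hc : ∀ i, IsCritExp a i (c i)) (i : Fin n) {p q : Fin n →₀ ℕ} (hpq : p ≠ q)
    (hple : p ≤ Finsupp.single i (c i))
    (hmem : (monomial p (1 : K) - monomial q (1 : K)) ∈ curveIdeal K a) :
    p = Finsupp.single i (c i) ∧ q i = 0 := by
  have hdeg := deg_eq_of_mem a hpq hmem
  have hple' : ∀ j, p j ≤ Finsupp.single i (c i) j := fun j => hple j
  have hp : p = Finsupp.single i (p i) := by
    ext j
    by_cases hj : j = i
    · subst hj; simp
    · have := hple' j
      simp only [Finsupp.single_apply, if_neg (Ne.symm hj)] at this ⊢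
      omega
  set m := p i with hm_def
  have hm : m ≤ c i := by simpa using hple' i
  have hdp : degN a p = m * a i := by rw [hp]; exact degN_single a i m
  set l := q i with hl_def
  set q' := q.erase i with hq'_def
  have hq'0 : q' i = 0 := Finsupp.erase_same
  have hqsplit : degN a q = l * a i + degN a q' := by
    have hqe : Finsupp.single i l + q' = q := Finsupp.single_add_erase i q
    calc degN a q = degN a (Finsupp.single i l + q') := by rw [hqe]
    _ = l * a i + degN a q' := by
        unfold degN
        simp only [Finsupp.add_apply, add_mul, Finset.sum_add_distrib]
        congr 1
        exact degN_single a i l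
  have key : m * a i = l * a i + degN a q' := by rw [← hdp, hdeg, hqsplit]
  have hai := ha i
  have hlm : l < m := by
    rcases lt_trichotomy l m with h | h | h
    · exact h
    · exfalso
      have hq'deg : degN a q' = 0 := by
        have : l * a i = m * a i := by rw [h]
        omega
      have hq'z : q' = 0 := by
        ext j
        have hj0 : q' j * a j = 0 := by
          have := (Finset.sum_eq_zero_iff).mp hq'deg j (Finset.mem_univ j)
          exact this
        have := ha j
        simpa [Nat.mul_eq_zero, Nat.pos_iff_ne_zero.mp (ha j)] using hj0
      have : q = Finsupp.single i l := by
        have hqe : Finsupp.single i l + q' = q := Finsupp.single_add_erase i q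
        rw [hq'z, add_zero] at hqe
        exact hqe.symm
      exact hpq (by rw [hp, this, h])
    · exfalso
      have : m * a i < l * a i := (Nat.mul_lt_mul_right hai).mpr h
      omega
  have hsub : (m - l) * a i = degN a q' := by
    rw [Nat.sub_mul]; omega
  have hcle : c i ≤ m - l := (hc i).2 ⟨by omega, q', hq'0, hsub.symm ▸ hsub⟩
  have hml : m = c i ∧ l = 0 := by omega
  exact ⟨by rw [hp, hml.1], hml.2⟩


/-- The set of all binomials belonging to an ideal `J`. -/
def Binoms {σ : Type*} (J : Ideal (MvPolynomial σ K)) : Set (MvPolynomial σ K) :=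
  {g | (∃ u v : σ →₀ ℕ, g = monomial u (1 : K) - monomial v (1 : K)) ∧ g ∈ J}

lemma indisp_iff {σ : Type*} (J : Ideal (MvPolynomial σ K))
    (hJ : Ideal.span (Binoms J) = J) {f : MvPolynomial σ K} (hfJ : f ∈ J) :
    IndispBinomial K J f ↔ f ∉ Ideal.span (Binoms J \ {f, -f}) := by
  constructor
  · intro hind hmem
    have hgen : IsBinomGenSet K J (Binoms J \ {f, -f}) := by
      refine ⟨fun g hg => hg.1.1, ?_⟩
      apply le_antisymm
      · rw [Ideal.span_le]
        exact fun g hg => hg.1.2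
      · conv_lhs => rw [← hJ]
        rw [Ideal.span_le]
        intro g hg
        by_cases hgf : g = f
        · subst hgf; exact hmem
        by_cases hgf' : g = -f
        · subst hgf'
          exact Submodule.neg_mem _ hmem
        · exact Ideal.subset_span ⟨hg, by simp [hgf, hgf']⟩
    rcases hind _ hgen with h | h
    · exact h.2 (Or.inl rfl)
    · exact h.2 (Or.inr (by simp))
  · intro hns S hS
    by_contra hcon
    push_neg at hcon
    have hSsub : S ⊆ Binoms J \ {f, -f} := by
      intro g hg
      refine ⟨⟨hS.1 g hg, hS.2 ▸ Ideal.subset_span hg⟩, ?_⟩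
      intro hmem
      rcases hmem with h | h
      · exact hcon.1 (h ▸ hg)
      · rw [Set.mem_singleton_iff] at h
        exact hcon.2 (by rw [← h]; exact hg)
    exact hns (Ideal.span_mono hSsub (hS.2.symm ▸ hfJ))

end S9

/-- A critical binomial `f = x_i^{c_i} - ∏_{j ≠ i} x_j^{u_{ij}}` of `I_A` is an
indispensable binomial of `I_A` if and only if it is an indispensable binomial of the critical
ideal `C_A`. -/
theorem statement9 {n : ℕ} (a c : Fin n → ℕ) (ha : ∀ i, 0 < a i)
    (hgcd : Finset.univ.gcd a = 1) (hc : ∀ i, IsCritExp a i (c i))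
    (i : Fin n) (f : MvPolynomial (Fin n) K) (hf : IsCritBinom K a c i f) :
    IndispBinomial K (curveIdeal K a) f ↔ IndispBinomial K (criticalIdeal K a c) f := by
  classical
  obtain ⟨v, hvi, hfeq, hfI⟩ := hf
  have hcpos : 0 < c i := (hc i).1.1
  set μ : Fin n →₀ ℕ := Finsupp.single i (c i) with hμdef
  have hμi : μ i = c i := by simp [hμdef]
  have hvμ : v ≠ μ := by
    intro h
    rw [h, hμi] at hvi
    omega
  have hfC : f ∈ criticalIdeal K a c := Ideal.subset_span ⟨i, v, hvi, hfeq, hfI⟩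
  have h1 : MvPolynomial.coeff μ f = 1 := by
    rw [hfeq]
    simp [MvPolynomial.coeff_monomial, hvμ]
  have hBI : Ideal.span (S9.Binoms (curveIdeal K a)) = curveIdeal K a := by
    apply le_antisymm
    · rw [Ideal.span_le]; exact fun g hg => hg.2
    · conv_lhs => rw [curveIdeal]
      rw [Ideal.span_le]
      rintro g hg
      obtain ⟨u', v', _, hgeq⟩ := id hg
      exact Ideal.subset_span ⟨⟨u', v', hgeq⟩, Ideal.subset_span hg⟩
  have hBC : Ideal.span (S9.Binoms (criticalIdeal K a c)) = criticalIdeal K a c := by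
    apply le_antisymm
    · rw [Ideal.span_le]; exact fun g hg => hg.2
    · conv_lhs => rw [criticalIdeal]
      rw [Ideal.span_le]
      rintro g hg
      obtain ⟨j, u', _, hgeq, _⟩ := id hg
      exact Ideal.subset_span ⟨⟨_, u', hgeq⟩, Ideal.subset_span hg⟩
  have hCsubI : criticalIdeal K a c ≤ curveIdeal K a := by
    rw [criticalIdeal, Ideal.span_le]
    rintro g ⟨j, u', _, _, hgI⟩
    exact hgI
  rw [S9.indisp_iff _ hBI hfI, S9.indisp_iff _ hBC hfC]
  constructor
  · intro h hmem
    apply h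
    refine Ideal.span_mono (Set.diff_subset_diff_left ?_) hmem
    exact fun g hg => ⟨hg.1, hCsubI hg.2⟩
  · intro hC hmem
    apply hC; clear hC
    -- main argument: extract another critical binomial w.r.t. i
    have main : ∀ p q : Fin n →₀ ℕ, p ≠ q → p ≤ μ →
        (monomial p (1 : K) - monomial q 1) ∈ curveIdeal K a →
        (monomial p (1 : K) - monomial q 1) ∉ ({f, -f} : Set (MvPolynomial (Fin n) K)) →
        f ∈ Ideal.span (S9.Binoms (criticalIdeal K a c) \ {f, -f}) := by
      intro p q hpq hple hgI hgnf
      obtain ⟨hpμ, hqi⟩ := S9.crit_of_le a c ha hc i hpq (hμdef ▸ hple) hgI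
      rw [← hμdef] at hpμ
      subst hpμ
      have hgC : (monomial μ (1 : K) - monomial q 1) ∈ criticalIdeal K a c :=
        Ideal.subset_span ⟨i, q, hqi, by rw [hμdef], hgI⟩
      have hgB : (monomial μ (1 : K) - monomial q 1) ∈
          S9.Binoms (criticalIdeal K a c) \ {f, -f} := ⟨⟨⟨μ, q, rfl⟩, hgC⟩, hgnf⟩
      have hqμ : q ≠ μ := by
        intro h
        rw [h, hμi] at hqi
        omega
      have hhC : (monomial q (1 : K) - monomial v 1) ∈ criticalIdeal K a c := by
        have hh : (monomial q (1 : K) - monomial v 1)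
            = f - (monomial μ (1 : K) - monomial q 1) := by rw [hfeq]; ring
        rw [hh]
        exact Submodule.sub_mem _ hfC hgC
      have hhcoeff : MvPolynomial.coeff μ (monomial q (1 : K) - monomial v 1) = 0 := by
        simp [MvPolynomial.coeff_monomial, hqμ, hvμ]
      have hhnf : (monomial q (1 : K) - monomial v 1)
          ∉ ({f, -f} : Set (MvPolynomial (Fin n) K)) := by
        intro hmem2
        rcases hmem2 with h | h
        · rw [h, h1] at hhcoeff
          exact one_ne_zero hhcoeff
        · rw [Set.mem_singleton_iff] at h
          rw [h, MvPolynomial.coeff_neg, h1] at hhcoeff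
          exact one_ne_zero (neg_eq_zero.mp hhcoeff)
      have hhB : (monomial q (1 : K) - monomial v 1) ∈
          S9.Binoms (criticalIdeal K a c) \ {f, -f} := ⟨⟨⟨q, v, rfl⟩, hhC⟩, hhnf⟩
      have hfsplit : f = (monomial μ (1 : K) - monomial q 1)
          + (monomial q (1 : K) - monomial v 1) := by rw [hfeq, hμdef]; ring
      have := Ideal.add_mem _ (Ideal.subset_span hgB) (Ideal.subset_span hhB)
      rwa [← hfsplit] at this
    rw [Ideal.span, Submodule.mem_span_set] at hmem
    obtain ⟨w, hwsupp, hwsum⟩ := hmem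
    have h2 : ∃ g ∈ w.support, MvPolynomial.coeff μ (w g * g) ≠ 0 := by
      by_contra hall
      push_neg at hall
      rw [← hwsum, Finsupp.sum, MvPolynomial.coeff_sum] at h1
      simp only [smul_eq_mul] at h1
      rw [Finset.sum_eq_zero (fun g hg => hall g hg)] at h1
      exact one_ne_zero h1.symm
    obtain ⟨g, hgsup, hgc⟩ := h2
    obtain ⟨⟨⟨p, q, hgeq⟩, hgI⟩, hgnf⟩ := hwsupp hgsup
    have hpq : p ≠ q := by
      rintro rfl
      rw [hgeq] at hgc
      simp at hgc
    have hple : p ≤ μ ∨ q ≤ μ := by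
      by_contra hno
      push_neg at hno
      apply hgc
      rw [hgeq, mul_sub, MvPolynomial.coeff_sub, MvPolynomial.coeff_mul_monomial',
        MvPolynomial.coeff_mul_monomial', if_neg hno.1, if_neg hno.2, sub_zero]
    rcases hple with h | h
    · exact main p q hpq h (hgeq ▸ hgI) (hgeq ▸ hgnf)
    · have hneg : (monomial q (1 : K) - monomial p 1) = -g := by rw [hgeq]; ring
      refine main q p (Ne.symm hpq) h ?_ ?_
      · rw [hneg]
        exact Submodule.neg_mem _ hgI
      · rw [hneg]
        intro hmem2
        apply hgnf
        rcases hmem2 with h2 | h2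
        · refine Or.inr (Set.mem_singleton_iff.mpr ?_)
          rw [← neg_neg g, h2]
        · rw [Set.mem_singleton_iff] at h2
          refine Or.inl ?_
          rw [← neg_neg g, h2, neg_neg]
end

section
/- Let i ≠ j, g = gcd(a_i,a_j), f = x_i^{a_j/g} − x_j^{a_i/g} (a circuit of I_A), and b = (a_j/g)·a_i. Then f is an indispensable binomial of I_A if and only if for every k ∉ {i,j}, b − a_k ∉ ℕA, i.e., there is no v ∈ ℕ^n with a_k + Σ_m v_m a_m = b. Moreover, if f is indispensable then a_j/g = c_i and a_i/g = c_j. -/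
open MvPolynomial Finsupp

variable (K : Type*) [Field K]

namespace Aux13

variable {n : ℕ} (a : Fin n → ℕ)

theorem degN_eq_weight (u : Fin n →₀ ℕ) : degN a u = weight a u := by
  rw [weight_apply, Finsupp.sum_fintype]
  · rfl
  · intro i; simp

theorem degN_add (u v : Fin n →₀ ℕ) : degN a (u + v) = degN a u + degN a v := by
  simp [degN_eq_weight]

theorem degN_single (i : Fin n) (k : ℕ) : degN a (Finsupp.single i k) = k * a i := by
  rw [degN, Finset.sum_eq_single i]
  · simp
  · intro b _ hb; simp [Finsupp.single_apply, Ne.symm hb]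
  · simp

/-- evaluation map x_i ↦ t^(a i) -/
noncomputable def ev : MvPolynomial (Fin n) K →ₐ[K] Polynomial K :=
  aeval (fun i => (Polynomial.X : Polynomial K) ^ a i)

theorem ev_monomial (u : Fin n →₀ ℕ) (r : K) :
    ev K a (monomial u r) = Polynomial.C r * Polynomial.X ^ degN a u := by
  rw [ev, aeval_monomial, Finsupp.prod_fintype]
  · rw [Algebra.algebraMap_eq_smul_one, Polynomial.smul_eq_C_mul, mul_one]
    congr 1
    simp only [← pow_mul]
    rw [Finset.prod_pow_eq_pow_sum]
    congr 1
    rw [degN]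
    exact Finset.sum_congr rfl (fun x _ => mul_comm _ _)
  · intro i; rfl

theorem ev_curveIdeal {f : MvPolynomial (Fin n) K} (hf : f ∈ curveIdeal K a) :
    ev K a f = 0 := by
  have : curveIdeal K a ≤ RingHom.ker (ev K a).toRingHom := by
    rw [curveIdeal, Ideal.span_le]
    rintro f ⟨u, v, huv, rfl⟩
    simp only [SetLike.mem_coe, RingHom.mem_ker, AlgHom.toRingHom_eq_coe, RingHom.coe_coe,
      map_sub, ev_monomial, huv, sub_self]
  exact this hf

theorem deg_eq_of_mem {u v : Fin n →₀ ℕ}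
    (h : (monomial u (1 : K) - monomial v (1 : K)) ∈ curveIdeal K a) :
    degN a u = degN a v := by
  have h2 := ev_curveIdeal K a h
  rw [map_sub, ev_monomial, ev_monomial, sub_eq_zero, map_one, one_mul, one_mul] at h2
  by_contra hne
  have := congrArg (Polynomial.coeff · (degN a u)) h2
  simp [Polynomial.coeff_X_pow, hne] at this

theorem binom_mem {u v : Fin n →₀ ℕ} (h : degN a u = degN a v) :
    (monomial u (1 : K) - monomial v (1 : K)) ∈ curveIdeal K a :=
  Ideal.subset_span ⟨u, v, h, rfl⟩


theorem key_dvd {ai aj : ℕ} (hi : 0 < ai) (hj : 0 < aj) {s t : ℕ}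
    (h : s * ai = t * aj) : (aj / Nat.gcd ai aj) ∣ s := by
  set g := Nat.gcd ai aj with hg
  have hgpos : 0 < g := Nat.gcd_pos_of_pos_left _ hi
  have hA : ai / g * g = ai := Nat.div_mul_cancel (Nat.gcd_dvd_left _ _)
  have hB : aj / g * g = aj := Nat.div_mul_cancel (Nat.gcd_dvd_right _ _)
  have hcop : Nat.Coprime (ai / g) (aj / g) := Nat.coprime_div_gcd_div_gcd hgpos
  have h2 : s * (ai / g) = t * (aj / g) := by
    apply Nat.eq_of_mul_eq_mul_right hgpos
    calc s * (ai / g) * g = s * ai := by rw [mul_assoc, hA]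
    _ = t * aj := h
    _ = t * (aj / g) * g := by rw [mul_assoc, hB]
  have : (aj / g) ∣ s * (ai / g) := ⟨t, by rw [h2, mul_comm]⟩
  exact (Nat.Coprime.dvd_of_dvd_mul_right (Nat.Coprime.symm hcop) this)

theorem lcm_comm' {ai aj : ℕ} :
    (aj / Nat.gcd ai aj) * ai = (ai / Nat.gcd ai aj) * aj := by
  rcases Nat.eq_zero_or_pos ai with h | hi
  · subst h; simp [Nat.gcd_comm]
  rcases Nat.eq_zero_or_pos aj with h | hj
  · subst h; simp
  have hgpos : 0 < Nat.gcd ai aj := Nat.gcd_pos_of_pos_left _ hi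
  apply Nat.eq_of_mul_eq_mul_right hgpos
  rw [mul_assoc, mul_assoc, mul_comm ai, mul_comm aj, ← mul_assoc, ← mul_assoc,
    Nat.div_mul_cancel (Nat.gcd_dvd_right _ _), Nat.div_mul_cancel (Nat.gcd_dvd_left _ _),
    mul_comm]

theorem nt {ai aj : ℕ} (hi : 0 < ai) (hj : 0 < aj) {s t : ℕ}
    (h : s * ai + t * aj = (aj / Nat.gcd ai aj) * ai) :
    (s = aj / Nat.gcd ai aj ∧ t = 0) ∨ (s = 0 ∧ t = ai / Nat.gcd ai aj) := by
  set g := Nat.gcd ai aj with hg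
  set B := aj / g with hBdef
  have hBpos : 0 < B := Nat.div_pos (Nat.le_of_dvd hj (Nat.gcd_dvd_right _ _))
    (Nat.gcd_pos_of_pos_left _ hi)
  have hs : s ≤ B := by
    by_contra hs
    push_neg at hs
    have : B * ai < s * ai := (Nat.mul_lt_mul_right hi).mpr hs
    omega
  have h3 : (B - s) * ai = t * aj := by
    rw [Nat.sub_mul]; omega
  have hdvd : B ∣ (B - s) := key_dvd hi hj h3
  rcases Nat.eq_zero_or_pos (B - s) with h0 | hpos
  · left
    have hsB : s = B := by omega
    refine ⟨hsB, ?_⟩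
    rw [h0] at h3
    simpa [hj.ne'] using h3.symm
  · right
    have : B ≤ B - s := Nat.le_of_dvd hpos hdvd
    have hs0 : s = 0 := by omega
    refine ⟨hs0, ?_⟩
    rw [hs0, Nat.sub_zero] at h3
    have := lcm_comm' (ai := ai) (aj := aj)
    apply Nat.eq_of_mul_eq_mul_right hj
    rw [← h3, this]




variable {n : ℕ} {a : Fin n → ℕ}

theorem sub_single_add {w : Fin n →₀ ℕ} {m : Fin n} (hm : 0 < w m) :
    w = Finsupp.single m 1 + (w - Finsupp.single m 1) := by
  ext m'
  simp only [Finsupp.add_apply, Finsupp.tsub_apply, Finsupp.single_apply]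
  by_cases h : m = m'
  · subst h; simp; omega
  · simp [h]

theorem degN_split {w : Fin n →₀ ℕ} {m : Fin n} (hm : 0 < w m) :
    degN a w = a m + degN a (w - Finsupp.single m 1) := by
  conv_lhs => rw [sub_single_add hm]
  rw [Aux13.degN_add, Aux13.degN_single, one_mul]

theorem fiber (ha : ∀ i, 0 < a i) (i j : Fin n) (hij : i ≠ j)
    (hRHS : ∀ m : Fin n, m ≠ i → m ≠ j →
      ¬ ∃ v : Fin n →₀ ℕ, a m + degN a v = (a j / Nat.gcd (a i) (a j)) * a i)
    {w : Fin n →₀ ℕ} (hw : degN a w = (a j / Nat.gcd (a i) (a j)) * a i) :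
    w = Finsupp.single i (a j / Nat.gcd (a i) (a j)) ∨
      w = Finsupp.single j (a i / Nat.gcd (a i) (a j)) := by
  have hsupp : ∀ m, m ≠ i → m ≠ j → w m = 0 := by
    intro m hmi hmj
    by_contra hm
    exact hRHS m hmi hmj ⟨w - Finsupp.single m 1, by
      rw [← degN_split (Nat.pos_of_ne_zero hm), hw]⟩
  have hwdec : w = Finsupp.single i (w i) + Finsupp.single j (w j) := by
    ext m'
    rw [Finsupp.add_apply, Finsupp.single_apply, Finsupp.single_apply]
    by_cases h1 : i = m'
    · subst h1; simp [Ne.symm hij, hij]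
    · by_cases h2 : j = m'
      · subst h2; simp [h1]
      · simp only [if_neg h1, if_neg h2, add_zero]
        exact hsupp m' (Ne.symm h1) (Ne.symm h2)
  have hdeg2 : w i * a i + w j * a j = (a j / Nat.gcd (a i) (a j)) * a i := by
    rw [← hw]
    conv_rhs => rw [hwdec]
    rw [Aux13.degN_add, Aux13.degN_single, Aux13.degN_single]
  rcases Aux13.nt (ha i) (ha j) hdeg2 with ⟨h1, h2⟩ | ⟨h1, h2⟩
  · left; rw [hwdec, h1, h2, Finsupp.single_zero, add_zero]
  · right; rw [hwdec, h1, h2, Finsupp.single_zero, zero_add]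


theorem crit_aux (ha : ∀ i, 0 < a i) (i j : Fin n) (hij : i ≠ j)
    (hRHS : ∀ m : Fin n, m ≠ i → m ≠ j →
      ¬ ∃ v : Fin n →₀ ℕ, a m + degN a v = (a j / Nat.gcd (a i) (a j)) * a i)
    {ci : ℕ} (hc : IsCritExp a i ci) :
    a j / Nat.gcd (a i) (a j) = ci := by
  set g := Nat.gcd (a i) (a j) with hg
  set p := a j / g with hp
  set q := a i / g with hq
  have hppos : 0 < p := Nat.div_pos (Nat.le_of_dvd (ha j) (Nat.gcd_dvd_right _ _))
    (Nat.gcd_pos_of_pos_left _ (ha i))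
  have hle : ci ≤ p := hc.2 ⟨hppos, Finsupp.single j q, by
      rw [Finsupp.single_apply, if_neg hij.symm], by
      rw [Aux13.degN_single]; exact Aux13.lcm_comm'⟩
  obtain ⟨⟨hcipos, u, hui, hdegu⟩, -⟩ := hc
  have hge : p ≤ ci := by
    by_contra hlt
    push_neg at hlt
    by_cases hex : ∃ m, m ≠ i ∧ m ≠ j ∧ 0 < u m
    · obtain ⟨m, hmi, hmj, hum⟩ := hex
      apply hRHS m hmi hmj
      refine ⟨Finsupp.single i (p - ci) + (u - Finsupp.single m 1), ?_⟩
      rw [Aux13.degN_add, Aux13.degN_single]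
      have h1 : degN a u = a m + degN a (u - Finsupp.single m 1) := Aux13.degN_split hum
      have h2 : (p - ci) * a i + ci * a i = p * a i := by
        rw [← Nat.add_mul]
        congr 1
        omega
      omega
    · push_neg at hex
      have hu : u = Finsupp.single j (u j) := by
        ext m'
        rw [Finsupp.single_apply]
        by_cases h2 : j = m'
        · subst h2; simp
        · rw [if_neg h2]
          by_cases h1 : m' = i
          · subst h1; exact hui
          · exact Nat.le_zero.mp (hex m' h1 (Ne.symm h2))
      rw [hu, Aux13.degN_single] at hdegu
      have hdvd : p ∣ ci := Aux13.key_dvd (ha i) (ha j) hdegu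
      exact absurd (Nat.le_of_dvd hcipos hdvd) (by omega)
  omega


theorem comp_monomial (b : ℕ) (w : Fin n →₀ ℕ) (r : K) :
    weightedHomogeneousComponent a b (monomial w r) =
      if degN a w = b then monomial w r else 0 := by
  classical
  ext d
  rw [coeff_weightedHomogeneousComponent, ← Aux13.degN_eq_weight]
  by_cases hdw : w = d
  · subst hdw
    split_ifs with h1 <;> simp [coeff_monomial]
  · split_ifs <;> simp [coeff_monomial, hdw]

theorem comp_mul_binom (b : ℕ) (w u' v' : Fin n →₀ ℕ) (r : K)
    (hdeg : degN a u' = degN a v') :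
    weightedHomogeneousComponent a b
        (monomial w r * (monomial u' (1 : K) - monomial v' (1 : K))) =
      if degN a (w + u') = b then monomial (w + u') r - monomial (w + v') r else 0 := by
  have hprod : monomial w r * (monomial u' (1 : K) - monomial v' (1 : K)) =
      monomial (w + u') r - monomial (w + v') r := by
    simp [mul_sub, monomial_mul]
  rw [hprod, map_sub, comp_monomial, comp_monomial]
  have : degN a (w + v') = degN a (w + u') := by
    rw [Aux13.degN_add, Aux13.degN_add, hdeg]
  rw [this]
  split_ifs with h1
  · rfl
  · rw [sub_zero]


theorem mem_of_gen {u v : Fin n →₀ ℕ} (huv : u ≠ v) (hdeg : degN a u = degN a v)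
    (hmin : ∀ m, u m = 0 ∨ v m = 0)
    (hfib : ∀ w, degN a w = degN a u → w = u ∨ w = v)
    (S : Set (MvPolynomial (Fin n) K))
    (hSbin : ∀ f ∈ S, ∃ u' v' : Fin n →₀ ℕ, f = monomial u' (1 : K) - monomial v' (1 : K))
    (hSspan : Ideal.span S = curveIdeal K a) :
    (monomial u (1 : K) - monomial v (1 : K)) ∈ S ∨
      -(monomial u (1 : K) - monomial v (1 : K)) ∈ S := by
  classical
  set f : MvPolynomial (Fin n) K := monomial u (1 : K) - monomial v (1 : K) with hfdef
  by_contra hcon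
  push_neg at hcon
  obtain ⟨hf1, hf2⟩ := hcon
  set b := degN a u with hb
  have hfI : f ∈ Ideal.span S := by
    rw [hSspan]
    exact Aux13.binom_mem K a hdeg
  rw [Ideal.span, Submodule.mem_span_set] at hfI
  obtain ⟨cf, hcsupp, hcsum⟩ := hfI
  -- the degree-b component of each summand vanishes
  have hzero : ∀ m ∈ cf.support,
      weightedHomogeneousComponent a b (cf m • m) = 0 := by
    intro m hm
    have hmS : m ∈ S := hcsupp hm
    obtain ⟨um, vm, hmeq⟩ := hSbin m hmS
    have hmI : m ∈ curveIdeal K a := by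
      rw [← hSspan]
      exact Ideal.subset_span hmS
    have hdegm : degN a um = degN a vm := by
      apply Aux13.deg_eq_of_mem K a
      rwa [← hmeq]
    rw [smul_eq_mul]
    set cm := cf m with hcm
    rw [hmeq]
    -- expand cf m into monomials
    rw [cm.as_sum, Finset.sum_mul, map_sum]
    apply Finset.sum_eq_zero
    intro w hw
    rw [Aux13.comp_mul_binom K b w um vm _ hdegm]
    split_ifs with hdb
    · -- the two exponents lie in the fiber
      by_cases humvm : um = vm
      · rw [humvm, sub_self]
      · exfalso
        have h1 : w + um = u ∨ w + um = v := hfib _ hdb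
        have hdb2 : degN a (w + vm) = b := by
          rw [Aux13.degN_add, ← hdegm, ← Aux13.degN_add]
          exact hdb
        have h2 : w + vm = u ∨ w + vm = v := hfib _ hdb2
        have hne : w + um ≠ w + vm := fun h => humvm (by
          ext m'
          have := DFunLike.congr_fun h m'
          simp only [Finsupp.add_apply] at this
          omega)
        rcases h1 with h1 | h1 <;> rcases h2 with h2 | h2
        · exact hne (h1.trans h2.symm)
        · -- w + um = u, w + vm = v ⇒ w = 0, m = f
          have hw0 : w = 0 := by
            ext m'
            have e1 := DFunLike.congr_fun h1 m'
            have e2 := DFunLike.congr_fun h2 m'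
            simp only [Finsupp.add_apply] at e1 e2
            rcases hmin m' with h | h <;> simp [Finsupp.coe_zero] <;> omega
          rw [hw0, zero_add] at h1 h2
          have hmf : m = f := by rw [hmeq, h1, h2]
          exact hf1 (hmf ▸ hmS)
        · -- w + um = v, w + vm = u ⇒ m = -f
          have hw0 : w = 0 := by
            ext m'
            have e1 := DFunLike.congr_fun h1 m'
            have e2 := DFunLike.congr_fun h2 m'
            simp only [Finsupp.add_apply] at e1 e2
            rcases hmin m' with h | h <;> simp [Finsupp.coe_zero] <;> omega
          rw [hw0, zero_add] at h1 h2
          have hmf : m = -f := by rw [hmeq, h1, h2, hfdef, neg_sub]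
          exact hf2 (hmf ▸ hmS)
        · exact hne (h1.trans h2.symm)
    · rfl
  have hcomp : weightedHomogeneousComponent a b f = f := by
    rw [hfdef, map_sub, Aux13.comp_monomial, Aux13.comp_monomial, if_pos rfl,
      if_pos hdeg.symm]
  have hfzero : f = 0 := by
    rw [← hcomp, ← hcsum, Finsupp.sum, map_sum]
    exact Finset.sum_eq_zero hzero
  have : coeff u f = 1 := by
    rw [hfdef, coeff_sub, coeff_monomial, coeff_monomial, if_pos rfl,
      if_neg (Ne.symm huv), sub_zero]
  rw [hfzero, coeff_zero] at this
  exact one_ne_zero this.symm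


theorem dispensable {u v w : Fin n →₀ ℕ} (hdeg : degN a u = degN a v)
    (hdw : degN a w = degN a u) (hwu : w ≠ u) (hwv : w ≠ v)
    (hind : ∀ S : Set (MvPolynomial (Fin n) K),
      ((∀ f ∈ S, ∃ u' v' : Fin n →₀ ℕ, f = monomial u' (1 : K) - monomial v' (1 : K)) ∧
        Ideal.span S = curveIdeal K a) →
      (monomial u (1 : K) - monomial v (1 : K)) ∈ S ∨
        -(monomial u (1 : K) - monomial v (1 : K)) ∈ S) : False := by
  classical
  set f : MvPolynomial (Fin n) K := monomial u (1 : K) - monomial v (1 : K) with hfdef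
  set S : Set (MvPolynomial (Fin n) K) :=
    {f' | (∃ α β : Fin n →₀ ℕ, degN a α = degN a β ∧
      f' = monomial α (1 : K) - monomial β (1 : K)) ∧ f' ≠ f ∧ f' ≠ -f} with hSdef
  have hcw : ∀ α β : Fin n →₀ ℕ, coeff w (monomial α (1 : K) - monomial β (1 : K)) =
      (if α = w then (1 : K) else 0) - (if β = w then (1 : K) else 0) := by
    intro α β
    rw [coeff_sub, coeff_monomial, coeff_monomial]
  have hfw : coeff w f = 0 := by
    rw [hfdef, hcw, if_neg (Ne.symm hwu), if_neg (Ne.symm hwv), sub_zero]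
  have hfnw : coeff w (-f) = 0 := by rw [coeff_neg, hfw, neg_zero]
  have hg1 : (monomial u (1 : K) - monomial w (1 : K)) ∈ S := by
    refine ⟨⟨u, w, hdw.symm, rfl⟩, ?_, ?_⟩
    · intro h
      have := congrArg (coeff w) h
      rw [hcw, if_neg (Ne.symm hwu), if_pos rfl, hfw, zero_sub] at this
      exact one_ne_zero (neg_eq_zero.mp this)
    · intro h
      have := congrArg (coeff w) h
      rw [hcw, if_neg (Ne.symm hwu), if_pos rfl, hfnw, zero_sub] at this
      exact one_ne_zero (neg_eq_zero.mp this)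
  have hg2 : (monomial w (1 : K) - monomial v (1 : K)) ∈ S := by
    refine ⟨⟨w, v, hdw.trans hdeg, rfl⟩, ?_, ?_⟩
    · intro h
      have := congrArg (coeff w) h
      rw [hcw, if_pos rfl, if_neg (Ne.symm hwv), hfw, sub_zero] at this
      exact one_ne_zero this
    · intro h
      have := congrArg (coeff w) h
      rw [hcw, if_pos rfl, if_neg (Ne.symm hwv), hfnw, sub_zero] at this
      exact one_ne_zero this
  have hg1' : (monomial w (1 : K) - monomial u (1 : K)) ∈ S := by
    refine ⟨⟨w, u, hdw, rfl⟩, ?_, ?_⟩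
    · intro h
      have := congrArg (coeff w) h
      rw [hcw, if_pos rfl, if_neg (Ne.symm hwu), hfw, sub_zero] at this
      exact one_ne_zero this
    · intro h
      have := congrArg (coeff w) h
      rw [hcw, if_pos rfl, if_neg (Ne.symm hwu), hfnw, sub_zero] at this
      exact one_ne_zero this
  have hg2' : (monomial v (1 : K) - monomial w (1 : K)) ∈ S := by
    refine ⟨⟨v, w, (hdw.trans hdeg).symm, rfl⟩, ?_, ?_⟩
    · intro h
      have := congrArg (coeff w) h
      rw [hcw, if_neg (Ne.symm hwv), if_pos rfl, hfw, zero_sub] at this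
      exact one_ne_zero (neg_eq_zero.mp this)
    · intro h
      have := congrArg (coeff w) h
      rw [hcw, if_neg (Ne.symm hwv), if_pos rfl, hfnw, zero_sub] at this
      exact one_ne_zero (neg_eq_zero.mp this)
  have hspan : Ideal.span S = curveIdeal K a := by
    apply le_antisymm
    · rw [Ideal.span_le]
      rintro t ⟨⟨α, β, hab, rfl⟩, -, -⟩
      exact Aux13.binom_mem K a hab
    · rw [curveIdeal, Ideal.span_le]
      rintro t ⟨α, β, hab, rfl⟩
      by_cases h1 : monomial α (1 : K) - monomial β (1 : K) = f
      · rw [h1]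
        have : f = (monomial u (1 : K) - monomial w (1 : K)) +
            (monomial w (1 : K) - monomial v (1 : K)) := by
          rw [hfdef]; ring
        rw [this]
        exact add_mem (Ideal.subset_span hg1) (Ideal.subset_span hg2)
      · by_cases h2 : monomial α (1 : K) - monomial β (1 : K) = -f
        · rw [h2]
          have : -f = (monomial v (1 : K) - monomial w (1 : K)) +
              (monomial w (1 : K) - monomial u (1 : K)) := by
            rw [hfdef]; ring
          rw [this]
          exact add_mem (Ideal.subset_span hg2') (Ideal.subset_span hg1')
        · exact Ideal.subset_span ⟨⟨α, β, hab, rfl⟩, h1, h2⟩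
  have hSbin : ∀ f' ∈ S, ∃ u' v' : Fin n →₀ ℕ,
      f' = monomial u' (1 : K) - monomial v' (1 : K) := by
    rintro f' ⟨⟨α, β, -, rfl⟩, -, -⟩
    exact ⟨α, β, rfl⟩
  rcases hind S ⟨hSbin, hspan⟩ with h | h
  · exact h.2.1 rfl
  · exact h.2.2 rfl

end Aux13

/-- Let `i ≠ j`, `g = gcd(a_i, a_j)`, `f = x_i^{a_j/g} - x_j^{a_i/g}` (a
circuit of `I_A`) and `b = (a_j/g) * a_i`. Then `f` is an indispensable binomial of `I_A` if and
only if `b - a_m ∉ ℕA` for every `m ∉ {i, j}`. Moreover, if `f` is indispensable then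
`a_j/g = c_i` and `a_i/g = c_j`. -/
theorem statement13 {n : ℕ} (a c : Fin n → ℕ) (ha : ∀ i, 0 < a i)
    (hgcd : Finset.univ.gcd a = 1) (hc : ∀ i, IsCritExp a i (c i))
    (i j : Fin n) (hij : i ≠ j) :
    (IndispBinomial K (curveIdeal K a)
        (monomial (Finsupp.single i (a j / Nat.gcd (a i) (a j))) (1 : K) -
          monomial (Finsupp.single j (a i / Nat.gcd (a i) (a j))) (1 : K)) ↔
      ∀ m : Fin n, m ≠ i → m ≠ j →
        ¬ ∃ v : Fin n →₀ ℕ, a m + degN a v = (a j / Nat.gcd (a i) (a j)) * a i) ∧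
    (IndispBinomial K (curveIdeal K a)
        (monomial (Finsupp.single i (a j / Nat.gcd (a i) (a j))) (1 : K) -
          monomial (Finsupp.single j (a i / Nat.gcd (a i) (a j))) (1 : K)) →
      a j / Nat.gcd (a i) (a j) = c i ∧ a i / Nat.gcd (a i) (a j) = c j) := by
  classical
  set g := Nat.gcd (a i) (a j) with hg
  set p := a j / g with hp
  set q := a i / g with hq
  set u : Fin n →₀ ℕ := Finsupp.single i p with hu
  set v : Fin n →₀ ℕ := Finsupp.single j q with hv
  have hgpos : 0 < g := Nat.gcd_pos_of_pos_left _ (ha i)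
  have hppos : 0 < p := Nat.div_pos (Nat.le_of_dvd (ha j) (Nat.gcd_dvd_right _ _)) hgpos
  have hqpos : 0 < q := Nat.div_pos (Nat.le_of_dvd (ha i) (Nat.gcd_dvd_left _ _)) hgpos
  have hdegu : degN a u = p * a i := Aux13.degN_single a i p
  have hdegv : degN a v = q * a j := Aux13.degN_single a j q
  have hdeg : degN a u = degN a v := by rw [hdegu, hdegv]; exact Aux13.lcm_comm'
  have huv : u ≠ v := by
    intro h
    have := DFunLike.congr_fun h i
    rw [hu, hv, Finsupp.single_apply, Finsupp.single_apply, if_pos rfl,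
      if_neg hij.symm] at this
    omega
  have hmin : ∀ m, u m = 0 ∨ v m = 0 := by
    intro m
    by_cases h : m = i
    · right; subst h; rw [hv, Finsupp.single_apply, if_neg hij.symm]
    · left; rw [hu, Finsupp.single_apply, if_neg (fun h' => h h'.symm)]
  have hRHSof : IndispBinomial K (curveIdeal K a)
      (monomial u (1 : K) - monomial v (1 : K)) →
      ∀ m : Fin n, m ≠ i → m ≠ j →
        ¬ ∃ w : Fin n →₀ ℕ, a m + degN a w = p * a i := by
    intro hind m hmi hmj hex
    obtain ⟨v0, hv0⟩ := hex
    set w : Fin n →₀ ℕ := Finsupp.single m 1 + v0 with hw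
    have hdw : degN a w = degN a u := by
      rw [hw, Aux13.degN_add, Aux13.degN_single, one_mul, hdegu, hv0]
    have hwm : 0 < w m := by
      rw [hw, Finsupp.add_apply, Finsupp.single_apply, if_pos rfl]
      omega
    have hwu : w ≠ u := by
      intro h
      have := DFunLike.congr_fun h m
      rw [hu, Finsupp.single_apply, if_neg (fun h' => hmi h'.symm)] at this
      omega
    have hwv : w ≠ v := by
      intro h
      have := DFunLike.congr_fun h m
      rw [hv, Finsupp.single_apply, if_neg (fun h' => hmj h'.symm)] at this
      omega
    exact Aux13.dispensable K hdeg hdw hwu hwv (fun S hS => hind S hS)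
  refine ⟨⟨hRHSof, ?_⟩, ?_⟩
  · intro hRHS S hS
    obtain ⟨hSbin, hSspan⟩ := hS
    have hfib : ∀ w, degN a w = degN a u → w = u ∨ w = v := by
      intro w hwdeg
      exact Aux13.fiber ha i j hij hRHS (by rw [hwdeg, hdegu])
    exact Aux13.mem_of_gen K huv hdeg hmin hfib S hSbin hSspan
  · intro hind
    have hRHS := hRHSof hind
    constructor
    · exact Aux13.crit_aux ha i j hij hRHS (hc i)
    · have hgc : Nat.gcd (a j) (a i) = g := Nat.gcd_comm _ _
      have hb' : (a i / Nat.gcd (a j) (a i)) * a j = p * a i := by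
        rw [hgc, hp, hg]
        exact Aux13.lcm_comm'.symm
      have hRHS' : ∀ m : Fin n, m ≠ j → m ≠ i →
          ¬ ∃ w : Fin n →₀ ℕ, a m + degN a w = (a i / Nat.gcd (a j) (a i)) * a j := by
        intro m hmj hmi hex
        obtain ⟨v0, hv0⟩ := hex
        exact hRHS m hmi hmj ⟨v0, by rw [← hb']; exact hv0⟩
      have := Aux13.crit_aux ha j i hij.symm hRHS' (hc j)
      rwa [hgc] at this
end
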